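/- arXiv:2106.04882 — 8 statements merged into one kernel-verified Lean document; each statement's English description precedes it below -/
import Mathlib

section
/- Let A be a Banach algebra with a two-sided contractive approximate identity (a_k)_{k∈K}, and let C be a C*-algebra with contractive approximate identity (c_i)_{i∈I}, both acting on the same space with C·A ⊆ A and A·C ⊆ A. Then for every a in the closed linear span A₀ of {c a c' : c, c' ∈ C, a ∈ A}, the net x_{(i,k)} = c_i a_k c_i satisfies lim_{(i,k)} x_{(i,k)} a = a and lim_{(i,k)} a x_{(i,k)} = a; in particular A₀ is a closed subalgebra of A with a two-sided approximate identity. -/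
/-!
On a generator `z = c a' c'` of `A₀` the identity
`cᵢ aₖ cᵢ z - z = cᵢ aₖ (cᵢ z - z) + cᵢ (aₖ z - z) + (cᵢ z - z)` and contractivity give
`‖cᵢ aₖ cᵢ z - z‖ ≤ ‖aₖ z - z‖ + 2 ‖cᵢ z - z‖`, which tends to `0` because `cᵢ c → c` and
`z ∈ A`. The net `cᵢ aₖ cᵢ` is uniformly bounded, so the `x` with `cᵢ aₖ cᵢ x → x` form a closed
subspace; it contains the generators, hence `A₀`. The right-hand side is symmetric, and `A₀` is
an algebra because `(C A C)(C A C) ⊆ C A C`.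
-/

open Filter Topology

/-- The norm-closed linear span of a set of operators. -/
noncomputable def clspan {H K : Type*} [NormedAddCommGroup H] [InnerProductSpace ℂ H]
    [NormedAddCommGroup K] [InnerProductSpace ℂ K] (S : Set (H →L[ℂ] K)) : Set (H →L[ℂ] K) :=
  closure ((Submodule.span ℂ S : Submodule ℂ (H →L[ℂ] K)) : Set (H →L[ℂ] K))

open scoped NNReal

theorem mul_mem_closure_span {𝕜 R : Type*} [CommSemiring 𝕜] [Semiring R] [Algebra 𝕜 R]
    [TopologicalSpace R] [ContinuousMul R] {S : Set R} (hS : ∀ x ∈ S, ∀ y ∈ S, x * y ∈ S)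
    {x y : R}
    (hx : x ∈ closure (Submodule.span 𝕜 S : Set R))
    (hy : y ∈ closure (Submodule.span 𝕜 S : Set R)) :
    x * y ∈ closure (Submodule.span 𝕜 S : Set R) :=
  let spanS : Subsemigroup R :=
    { carrier := Submodule.span 𝕜 S
      mul_mem' := fun hu hv => Submodule.span_mono (Set.mul_subset_iff.2 hS) <|
        Submodule.span_mul_span 𝕜 S S ▸ Submodule.mul_mem_mul hu hv }
  spanS.topologicalClosure.mul_mem hx hy

section ClosureSpan

variable {𝕜 : Type*} [NormedField 𝕜] {P : Type*} {l : Filter P}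

theorem tendsto_apply_of_mem_closure_span {E : Type*} [SeminormedAddCommGroup E]
    [NormedSpace 𝕜 E] {T : P → E →ₗ[𝕜] E} {K : ℝ≥0} (hT : ∀ p, LipschitzWith K (T p))
    {S : Set E} (hS : ∀ x ∈ S, Tendsto (T · x) l (𝓝 x)) {x : E}
    (hx : x ∈ closure (Submodule.span 𝕜 S : Set E)) :
    Tendsto (T · x) l (𝓝 x) := by
  let M : Submodule 𝕜 E :=
    { carrier := {x | Tendsto (T · x) l (𝓝 x)}
      add_mem' := fun hx hy => by simpa using hx.add hy
      zero_mem' := by simpa using tendsto_const_nhds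
      smul_mem' := fun r x hx => by simpa using hx.const_smul r }
  have hM : IsClosed (M : Set E) :=
    (LipschitzWith.uniformEquicontinuous _ K hT).equicontinuous.isClosed_setOfPred_tendsto
      continuous_id
  exact closure_minimal (Submodule.span_le (p := M) |>.2 hS) hM hx

variable {R : Type*} [NormedRing R] [NormedAlgebra 𝕜 R] {e : P → R} {C : ℝ} {S : Set R} {x : R}

theorem tendsto_mul_left_of_mem_closure_span (he : ∀ p, ‖e p‖ ≤ C)
    (hS : ∀ x ∈ S, Tendsto (e · * x) l (𝓝 x)) (hx : x ∈ closure (Submodule.span 𝕜 S : Set R)) :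
    Tendsto (e · * x) l (𝓝 x) :=
  tendsto_apply_of_mem_closure_span (T := fun p => LinearMap.mulLeft 𝕜 (e p))
    (fun p => AddMonoidHomClass.lipschitz_of_bound _ C fun _ => norm_mul_le_of_le (he p) le_rfl)
    hS hx

theorem tendsto_mul_right_of_mem_closure_span (he : ∀ p, ‖e p‖ ≤ C)
    (hS : ∀ x ∈ S, Tendsto (x * e ·) l (𝓝 x)) (hx : x ∈ closure (Submodule.span 𝕜 S : Set R)) :
    Tendsto (x * e ·) l (𝓝 x) :=
  tendsto_apply_of_mem_closure_span (T := fun p => LinearMap.mulRight 𝕜 (e p))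
    (fun p => AddMonoidHomClass.lipschitz_of_bound _ C fun _ =>
      (norm_mul_le_of_le le_rfl (he p)).trans_eq (mul_comm _ _))
    hS hx

end ClosureSpan

section NormedRing

variable {R : Type*} [NormedRing R]

theorem norm_mul_mul_mul_sub_le {c a z : R} (hc : ‖c‖ ≤ 1) (ha : ‖a‖ ≤ 1) :
    ‖c * a * c * z - z‖ ≤ ‖a * z - z‖ + 2 * ‖c * z - z‖ := by
  have hca : ‖c * a‖ ≤ 1 := by simpa using norm_mul_le_of_le hc ha
  calc ‖c * a * c * z - z‖ = ‖c * a * (c * z - z) + c * (a * z - z) + (c * z - z)‖ := by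
        congr 1; noncomm_ring
    _ ≤ ‖c * a * (c * z - z)‖ + ‖c * (a * z - z)‖ + ‖c * z - z‖ := norm_add₃_le
    _ ≤ ‖c * z - z‖ + ‖a * z - z‖ + ‖c * z - z‖ := by
        gcongr
        · exact (norm_mul_le _ _).trans (mul_le_of_le_one_left (norm_nonneg _) hca)
        · exact (norm_mul_le _ _).trans (mul_le_of_le_one_left (norm_nonneg _) hc)
    _ = ‖a * z - z‖ + 2 * ‖c * z - z‖ := by ring

variable {ι κ : Type*} {l₁ : Filter ι} {l₂ : Filter κ} {c : ι → R} {a : κ → R} {z : R}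

theorem Filter.Tendsto.mul_mul_mul_left (hc : ∀ i, ‖c i‖ ≤ 1) (ha : ∀ k, ‖a k‖ ≤ 1)
    (hcz : Tendsto (c · * z) l₁ (𝓝 z)) (haz : Tendsto (a · * z) l₂ (𝓝 z)) :
    Tendsto (fun p : ι × κ => c p.1 * a p.2 * c p.1 * z) (l₁ ×ˢ l₂) (𝓝 z) := by
  rw [tendsto_iff_norm_sub_tendsto_zero] at hcz haz ⊢
  have hbound : Tendsto (fun p : ι × κ => ‖a p.2 * z - z‖ + 2 * ‖c p.1 * z - z‖)
      (l₁ ×ˢ l₂) (𝓝 0) := by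
    simpa using (haz.comp tendsto_snd).add ((hcz.comp tendsto_fst).const_mul 2)
  exact squeeze_zero (fun _ => norm_nonneg _)
    (fun p => norm_mul_mul_mul_sub_le (hc p.1) (ha p.2)) hbound

theorem Filter.Tendsto.mul_mul_mul_right (hc : ∀ i, ‖c i‖ ≤ 1) (ha : ∀ k, ‖a k‖ ≤ 1)
    (hcz : Tendsto (z * c ·) l₁ (𝓝 z)) (haz : Tendsto (z * a ·) l₂ (𝓝 z)) :
    Tendsto (fun p : ι × κ => z * (c p.1 * a p.2 * c p.1)) (l₁ ×ˢ l₂) (𝓝 z) := by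
  have hop := Tendsto.mul_mul_mul_left (c := MulOpposite.op ∘ c) (a := MulOpposite.op ∘ a)
    (z := MulOpposite.op z) hc ha
    ((MulOpposite.continuous_op.tendsto z).comp hcz)
    ((MulOpposite.continuous_op.tendsto z).comp haz)
  simpa [Function.comp_def, ← MulOpposite.op_mul, mul_assoc] using
    (MulOpposite.continuous_unop.tendsto _).comp hop

end NormedRing

theorem stmt_0_general {H : Type*} [NormedAddCommGroup H] [InnerProductSpace ℂ H]
    (A C : Submodule ℂ (H →L[ℂ] H))
    (hAc : IsClosed (A : Set (H →L[ℂ] H)))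
    (hAm : ∀ x ∈ A, ∀ y ∈ A, x ∘L y ∈ A)
    (hCA : ∀ c' ∈ C, ∀ a' ∈ A, c' ∘L a' ∈ A)
    (hAC : ∀ a' ∈ A, ∀ c' ∈ C, a' ∘L c' ∈ A)
    {ι κ : Type*} [Preorder ι] [Preorder κ]
    (c : ι → (H →L[ℂ] H)) (hcn : ∀ i, ‖c i‖ ≤ 1)
    (hcL : ∀ x ∈ C, Tendsto (fun i => c i ∘L x) atTop (𝓝 x))
    (hcR : ∀ x ∈ C, Tendsto (fun i => x ∘L c i) atTop (𝓝 x))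
    (a : κ → (H →L[ℂ] H)) (han : ∀ k, ‖a k‖ ≤ 1)
    (haL : ∀ x ∈ A, Tendsto (fun k => a k ∘L x) atTop (𝓝 x))
    (haR : ∀ x ∈ A, Tendsto (fun k => x ∘L a k) atTop (𝓝 x))
    (A₀ : Set (H →L[ℂ] H))
    (hA₀ : A₀ = clspan {x : H →L[ℂ] H |
      ∃ c' ∈ C, ∃ a' ∈ A, ∃ c'' ∈ C, x = c' ∘L a' ∘L c''}) :
    A₀ ⊆ (A : Set (H →L[ℂ] H)) ∧ IsClosed A₀ ∧
    (∀ x ∈ A₀, ∀ y ∈ A₀, x ∘L y ∈ A₀) ∧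
    (∀ x ∈ A₀,
      Tendsto (fun p : ι × κ => (c p.1 ∘L a p.2 ∘L c p.1) ∘L x) atTop (𝓝 x) ∧
      Tendsto (fun p : ι × κ => x ∘L (c p.1 ∘L a p.2 ∘L c p.1)) atTop (𝓝 x)) := by
  subst hA₀
  simp only [← ContinuousLinearMap.mul_def] at *
  set S := {x : H →L[ℂ] H | ∃ c' ∈ C, ∃ a' ∈ A, ∃ c'' ∈ C, x = c' * (a' * c'')}
  have hSA : S ⊆ A := by
    rintro _ ⟨c₁, hc₁, a₁, ha₁, c₂, hc₂, rfl⟩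
    exact hCA _ hc₁ _ (hAC _ ha₁ _ hc₂)
  have hSS : ∀ x ∈ S, ∀ y ∈ S, x * y ∈ S := by
    rintro _ ⟨c₁, hc₁, a₁, ha₁, c₂, hc₂, rfl⟩ _ ⟨c₃, hc₃, a₂, ha₂, c₄, hc₄, rfl⟩
    exact ⟨c₁, hc₁, a₁ * c₂ * (c₃ * a₂), hAm _ (hAC _ ha₁ _ hc₂) _ (hCA _ hc₃ _ ha₂), c₄, hc₄,
      by noncomm_ring⟩
  have hd : ∀ p : ι × κ, ‖c p.1 * (a p.2 * c p.1)‖ ≤ 1 := fun p => by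
    simpa using norm_mul_le_of_le (hcn p.1) (norm_mul_le_of_le (han p.2) (hcn p.1))
  have hcS : ∀ z ∈ S, Tendsto (c · * z) atTop (𝓝 z) ∧ Tendsto (z * c ·) atTop (𝓝 z) := by
    rintro _ ⟨c₁, hc₁, a₁, -, c₂, hc₂, rfl⟩
    exact ⟨by simpa only [mul_assoc] using (hcL c₁ hc₁).mul_const (a₁ * c₂),
      by simpa only [mul_assoc] using (hcR c₂ hc₂).const_mul (c₁ * a₁)⟩
  refine ⟨closure_minimal (Submodule.span_le.2 hSA) hAc, isClosed_closure,
    fun x hx y hy => mul_mem_closure_span hSS hx hy, fun x hx => ⟨?_, ?_⟩⟩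
  · refine tendsto_mul_left_of_mem_closure_span hd (fun z hz => ?_) hx
    simpa only [← prod_atTop_atTop_eq, mul_assoc] using
      (hcS z hz).1.mul_mul_mul_left hcn han (haL z (hSA hz))
  · refine tendsto_mul_right_of_mem_closure_span hd (fun z hz => ?_) hx
    simpa only [← prod_atTop_atTop_eq, mul_assoc] using
      (hcS z hz).2.mul_mul_mul_right hcn han (haR z (hSA hz))

/-- If `A` is a norm-closed subalgebra of `B(H)` with a two-sided contractive
approximate identity `(a k)`, `C` is a C*-subalgebra of `B(H)` with contractive approximate
identity `(c i)`, `C A ⊆ A` and `A C ⊆ A`, then for each `x` in `A₀ := clspan (C A C)`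
the net `c_i a_k c_i` is a two-sided approximate identity, and `A₀` is closed under
multiplication. -/
theorem stmt_0 {H : Type*} [NormedAddCommGroup H] [InnerProductSpace ℂ H] [CompleteSpace H]
    (A C : Submodule ℂ (H →L[ℂ] H))
    (hAc : IsClosed (A : Set (H →L[ℂ] H))) (hCc : IsClosed (C : Set (H →L[ℂ] H)))
    (hAm : ∀ x ∈ A, ∀ y ∈ A, x ∘L y ∈ A)
    (hCm : ∀ x ∈ C, ∀ y ∈ C, x ∘L y ∈ C)
    (hCstar : ∀ x ∈ C, ContinuousLinearMap.adjoint x ∈ C)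
    (hCA : ∀ c' ∈ C, ∀ a' ∈ A, c' ∘L a' ∈ A)
    (hAC : ∀ a' ∈ A, ∀ c' ∈ C, a' ∘L c' ∈ A)
    {ι κ : Type*} [Preorder ι] [IsDirected ι (· ≤ ·)] [Nonempty ι]
    [Preorder κ] [IsDirected κ (· ≤ ·)] [Nonempty κ]
    (c : ι → (H →L[ℂ] H)) (hc : ∀ i, c i ∈ C) (hcn : ∀ i, ‖c i‖ ≤ 1)
    (hcL : ∀ x ∈ C, Tendsto (fun i => c i ∘L x) atTop (𝓝 x))
    (hcR : ∀ x ∈ C, Tendsto (fun i => x ∘L c i) atTop (𝓝 x))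
    (a : κ → (H →L[ℂ] H)) (ha : ∀ k, a k ∈ A) (han : ∀ k, ‖a k‖ ≤ 1)
    (haL : ∀ x ∈ A, Tendsto (fun k => a k ∘L x) atTop (𝓝 x))
    (haR : ∀ x ∈ A, Tendsto (fun k => x ∘L a k) atTop (𝓝 x))
    (A₀ : Set (H →L[ℂ] H))
    (hA₀ : A₀ = clspan {x : H →L[ℂ] H |
      ∃ c' ∈ C, ∃ a' ∈ A, ∃ c'' ∈ C, x = c' ∘L a' ∘L c''}) :
    A₀ ⊆ (A : Set (H →L[ℂ] H)) ∧ IsClosed A₀ ∧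
    (∀ x ∈ A₀, ∀ y ∈ A₀, x ∘L y ∈ A₀) ∧
    (∀ x ∈ A₀,
      Tendsto (fun p : ι × κ => (c p.1 ∘L a p.2 ∘L c p.1) ∘L x) atTop (𝓝 x) ∧
      Tendsto (fun p : ι × κ => x ∘L (c p.1 ∘L a p.2 ∘L c p.1)) atTop (𝓝 x)) :=
  stmt_0_general A C hAc hAm hCA hAC c hcn hcL hcR a han haL haR A₀ hA₀
end

section
/- Let A ⊆ B(H) be an operator algebra, M ⊆ B(H,K) a norm-closed TRO with M* M A ⊆ A and A M* M ⊆ A. Set B = closed span of M A M* and A₀ = closed span of M* B M. Then the closed span of M A₀ M* equals B, and A₀ equals the closed span of M* M A M* M; i.e., A₀ and B are TRO-equivalent via M. -/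
open Filter Topology ContinuousLinearMap

set_option maxHeartbeats 1000000
set_option synthInstance.maxHeartbeats 400000

section Helpers

variable {H₁ K₁ H₂ K₂ : Type*} [NormedAddCommGroup H₁] [InnerProductSpace ℂ H₁]
  [NormedAddCommGroup K₁] [InnerProductSpace ℂ K₁]
  [NormedAddCommGroup H₂] [InnerProductSpace ℂ H₂]
  [NormedAddCommGroup K₂] [InnerProductSpace ℂ K₂]

lemma mem_clspan {S : Set (H₁ →L[ℂ] K₁)} {x : H₁ →L[ℂ] K₁} (h : x ∈ S) : x ∈ clspan S :=
  subset_closure (Submodule.subset_span h)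

lemma clspan_coe (S : Set (H₁ →L[ℂ] K₁)) :
    clspan S = ((Submodule.span ℂ S).topologicalClosure : Set (H₁ →L[ℂ] K₁)) :=
  (Submodule.topologicalClosure_coe _).symm

lemma clspan_le {S S' : Set (H₁ →L[ℂ] K₁)} (h : S ⊆ clspan S') : clspan S ⊆ clspan S' := by
  rw [clspan_coe S'] at h ⊢
  refine closure_minimal ?_ (Submodule.isClosed_topologicalClosure _)
  exact_mod_cast Submodule.span_le.mpr h

lemma map_clspan {S : Set (H₁ →L[ℂ] K₁)} {S' : Set (H₂ →L[ℂ] K₂)}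
    (f : (H₁ →L[ℂ] K₁) → (H₂ →L[ℂ] K₂))
    (hadd : ∀ x y, f (x + y) = f x + f y)
    (hsmul : ∀ (c : ℂ) (x), f (c • x) = c • f x)
    (hcont : Continuous f)
    (h : ∀ x ∈ S, f x ∈ clspan S') :
    ∀ x ∈ clspan S, f x ∈ clspan S' := by
  intro x hx
  have hNsub : ∀ y ∈ (Submodule.span ℂ S : Set (H₁ →L[ℂ] K₁)), f y ∈ clspan S' := by
    intro y hy
    rw [clspan_coe S'] at *
    induction hy using Submodule.span_induction with
    | mem z hz => rw [← clspan_coe S']; exact h z hz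
    | zero =>
        have h0 : f 0 = 0 := by
          have := hsmul 0 0; simpa using this
        rw [h0]; exact Submodule.zero_mem _
    | add u v hu hv ihu ihv => rw [hadd]; exact Submodule.add_mem _ ihu ihv
    | smul c u hu ihu => rw [hsmul]; exact Submodule.smul_mem _ _ ihu
  have := map_mem_closure hcont hx hNsub
  rwa [clspan, closure_closure, ← clspan] at this

end Helpers

lemma poly_bound {R t : ℝ} (hR : 0 < R) (N : ℕ) (h0 : 0 ≤ t) (h1 : t ≤ R) :
    t * (1 - R⁻¹ * t) ^ (2 * (N + 1)) ≤ R / (2 * (N + 1)) := by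
  set u : ℝ := R⁻¹ * t with hu
  have hu0 : 0 ≤ u := by positivity
  have hu1 : u ≤ 1 := by
    rw [hu]; rw [inv_mul_le_iff₀ hR]; simpa using h1
  have ht : t = R * u := by rw [hu, ← mul_assoc, mul_inv_cancel₀ hR.ne', one_mul]
  set a : ℝ := (1 - u) ^ (2 * (N + 1)) with ha
  have ha0 : 0 ≤ a := by
    rw [ha, pow_mul]; positivity
  have key : a * (1 + (2 * (N + 1) : ℕ) * u) ≤ 1 := by
    have h2 : (1 + (2 * (N + 1) : ℕ) * u) ≤ (1 + u) ^ (2 * (N + 1)) :=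
      one_add_mul_le_pow (by linarith) _
    have h3 : a * (1 + u) ^ (2 * (N + 1)) = (1 - u ^ 2) ^ (2 * (N + 1)) := by
      rw [ha, ← mul_pow]; ring_nf
    have h4 : (1 - u ^ 2 : ℝ) ^ (2 * (N + 1)) ≤ 1 := by
      apply pow_le_one₀ (by nlinarith) (by nlinarith)
    calc a * (1 + (2 * (N + 1) : ℕ) * u) ≤ a * (1 + u) ^ (2 * (N + 1)) := by
          exact mul_le_mul_of_nonneg_left h2 ha0
      _ ≤ 1 := by rw [h3]; exact h4
  have hNpos : (0:ℝ) < 2 * (N + 1) := by positivity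
  rw [ht, le_div_iff₀ hNpos]
  push_cast at key ⊢
  nlinarith [mul_nonneg hu0 ha0]

lemma approx_key {H K : Type*} [NormedAddCommGroup H] [InnerProductSpace ℂ H] [CompleteSpace H]
    [NormedAddCommGroup K] [InnerProductSpace ℂ K] [CompleteSpace K]
    (m : H →L[ℂ] K) (hm : m ≠ 0) {δ : ℝ} (hδ : 0 < δ) :
    ∃ S : H →L[ℂ] H, S ∈ Submodule.span ℂ
        {x : H →L[ℂ] H | ∃ k : ℕ, x = (adjoint m ∘L m) ^ (k + 1)} ∧
      IsSelfAdjoint S ∧ ‖m - m ∘L S‖ < δ := by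
  set T : H →L[ℂ] H := adjoint m ∘L m with hTdef
  have hTpos : T.IsPositive := by
    have := (isPositive_one (E := K) (𝕜 := ℂ)).adjoint_conj m
    rwa [one_def, id_comp] at this
  have hTsa : IsSelfAdjoint T := hTpos.isSelfAdjoint
  have hmn : 0 < ‖m‖ := norm_pos_iff.mpr hm
  set R : ℝ := ‖T‖ with hRdef
  have hR : 0 < R := by
    rw [hRdef, hTdef, norm_adjoint_comp_self]; positivity
  have hspec : ∀ t ∈ spectrum ℝ T, 0 ≤ t ∧ t ≤ R := by
    intro t ht
    constructor
    · exact spectrum_nonneg_of_nonneg ((nonneg_iff_isPositive _).mpr hTpos) ht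
    · have hH : Nontrivial H := by
        by_contra h
        rw [not_nontrivial_iff_subsingleton] at h
        exact hm (by ext x; simp [Subsingleton.elim x (0:H)])
      calc t ≤ ‖t‖ := le_abs_self t
        _ ≤ _ := spectrum.norm_le_norm_of_mem ht
  have hsm : ∀ (r : ℝ) (x : H →L[ℂ] H), r • x = (r : ℂ) • x := by
    intro r x
    rw [← smul_one_smul ℂ r x, Complex.real_smul, mul_one]
  set D : H →L[ℂ] H := 1 - R⁻¹ • T with hDdef
  have hDsa : IsSelfAdjoint D := by
    rw [IsSelfAdjoint, hDdef, star_sub, star_one, hsm, star_smul, hTsa.star_eq,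
      RCLike.star_def, Complex.conj_ofReal, ← hsm]
  set U : Submodule ℂ (H →L[ℂ] H) :=
    Submodule.span ℂ {x : H →L[ℂ] H | ∃ k : ℕ, x = T ^ (k + 1)} with hUdef
  have hTU : T ∈ U := Submodule.subset_span ⟨0, by rw [pow_one]⟩
  have hmulU : ∀ s ∈ U, s * T ∈ U := by
    intro s hs
    induction hs using Submodule.span_induction with
    | mem x hx =>
        obtain ⟨k, rfl⟩ := hx
        exact Submodule.subset_span ⟨k + 1, by rw [← pow_succ]⟩
    | zero => simp only [zero_mul]; exact U.zero_mem
    | add x y hx hy ihx ihy => rw [add_mul]; exact U.add_mem ihx ihy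
    | smul c x hx ih => rw [smul_mul_assoc]; exact U.smul_mem c ih
  have hmem : ∀ N : ℕ, (1 - D ^ N) ∈ U := by
    intro N
    induction N with
    | zero => simp only [pow_zero, sub_self]; exact U.zero_mem
    | succ N ih =>
        have hstep : 1 - D ^ (N + 1) =
            (1 - D ^ N) + (R⁻¹ • T - R⁻¹ • ((1 - D ^ N) * T)) := by
          have : D ^ (N + 1) = D ^ N - R⁻¹ • (D ^ N * T) := by
            rw [pow_succ, hDdef, mul_sub, mul_one, mul_smul_comm]
          rw [this, sub_mul, one_mul, smul_sub]; abel
        rw [hstep]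
        refine U.add_mem ih (U.sub_mem ?_ ?_)
        · rw [hsm]; exact U.smul_mem _ hTU
        · rw [hsm]; exact U.smul_mem _ (hmulU _ ih)
  obtain ⟨N, hN⟩ := exists_nat_gt (R / δ ^ 2)
  have hsa : IsSelfAdjoint (1 - D ^ (N + 1)) := by
    rw [IsSelfAdjoint, star_sub, star_one, (hDsa.pow _).star_eq]
  refine ⟨1 - D ^ (N + 1), hmem (N + 1), hsa, ?_⟩
  have hdiff : m - m ∘L (1 - D ^ (N + 1)) = m ∘L D ^ (N + 1) := by
    rw [comp_sub, show m ∘L (1 : H →L[ℂ] H) = m from by ext x; rfl, sub_sub_cancel]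
  have hsq : ‖m ∘L D ^ (N + 1)‖ * ‖m ∘L D ^ (N + 1)‖ = ‖D ^ (N + 1) * (T * D ^ (N + 1))‖ := by
    rw [← norm_adjoint_comp_self]
    congr 1
    rw [adjoint_comp, ← star_eq_adjoint, (hDsa.pow _).star_eq]
    rfl
  have hcfc : cfc (fun t : ℝ => (1 - R⁻¹ * t) ^ (N + 1) * (t * (1 - R⁻¹ * t) ^ (N + 1))) T
      = D ^ (N + 1) * (T * D ^ (N + 1)) := by
    have h1 : cfc (fun t : ℝ => 1 - R⁻¹ * t) T = D := by
      rw [cfc_sub (fun _ => (1 : ℝ)) (fun t => R⁻¹ * t) T, cfc_const_one ℝ T,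
        cfc_const_mul_id R⁻¹ T hTsa, hDdef]
    rw [cfc_mul _ _ T, cfc_mul _ _ T, cfc_pow (fun t : ℝ => 1 - R⁻¹ * t) _ T, h1, cfc_id' ℝ T]
  have hbound : ‖D ^ (N + 1) * (T * D ^ (N + 1))‖ ≤ R / (2 * (N + 1)) := by
    rw [← hcfc]
    refine norm_cfc_le (by positivity) ?_
    intro t ht
    obtain ⟨h0, h1⟩ := hspec t ht
    have hpb := poly_bound hR N h0 h1
    have hnn : (0:ℝ) ≤ (1 - R⁻¹ * t) ^ (N + 1) * (t * (1 - R⁻¹ * t) ^ (N + 1)) := by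
      have : (1 - R⁻¹ * t) ^ (N + 1) * (t * (1 - R⁻¹ * t) ^ (N + 1))
          = t * ((1 - R⁻¹ * t) ^ (N + 1)) ^ 2 := by ring
      rw [this]; positivity
    rw [Real.norm_eq_abs, abs_of_nonneg hnn]
    calc (1 - R⁻¹ * t) ^ (N + 1) * (t * (1 - R⁻¹ * t) ^ (N + 1))
        = t * (1 - R⁻¹ * t) ^ (2 * (N + 1)) := by ring
      _ ≤ R / (2 * (N + 1)) := hpb
  rw [hdiff]
  have h2 : ‖m ∘L D ^ (N + 1)‖ * ‖m ∘L D ^ (N + 1)‖ ≤ R / (2 * (N + 1)) := by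
    rw [hsq]; exact hbound
  have h3 : R / (2 * (N + 1)) < δ ^ 2 := by
    rw [div_lt_iff₀ (by positivity)]
    rw [div_lt_iff₀ (by positivity)] at hN
    nlinarith [hδ, sq_nonneg δ]
  nlinarith [norm_nonneg (m ∘L D ^ (N + 1)), hδ]

/-- With `A` an operator algebra, `M` a norm-closed TRO, `M* M A ⊆ A`,
`A M* M ⊆ A`, `B = clspan (M A M*)`, `A₀ = clspan (M* B M)`, one has
`clspan (M A₀ M*) = B` and `A₀ = clspan (M* M A M* M)`; i.e. `A₀ ∼_TRO B` via `M`. -/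
theorem stmt_2 {H K : Type*} [NormedAddCommGroup H] [InnerProductSpace ℂ H] [CompleteSpace H]
    [NormedAddCommGroup K] [InnerProductSpace ℂ K] [CompleteSpace K]
    (A : Submodule ℂ (H →L[ℂ] H)) (M : Submodule ℂ (H →L[ℂ] K))
    (hAc : IsClosed (A : Set (H →L[ℂ] H))) (hAm : ∀ x ∈ A, ∀ y ∈ A, x ∘L y ∈ A)
    (hMc : IsClosed (M : Set (H →L[ℂ] K)))
    (hMtro : ∀ x ∈ M, ∀ y ∈ M, ∀ z ∈ M, x ∘L (adjoint y ∘L z) ∈ M)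
    (hMMA : ∀ x ∈ M, ∀ y ∈ M, ∀ a ∈ A, adjoint x ∘L (y ∘L a) ∈ A)
    (hAMM : ∀ a ∈ A, ∀ x ∈ M, ∀ y ∈ M, a ∘L (adjoint x ∘L y) ∈ A)
    (B : Set (K →L[ℂ] K)) (A₀ : Set (H →L[ℂ] H))
    (hB : B = clspan {x : K →L[ℂ] K | ∃ m ∈ M, ∃ a ∈ A, ∃ n ∈ M, x = m ∘L a ∘L adjoint n})
    (hA₀ : A₀ = clspan {x : H →L[ℂ] H | ∃ m ∈ M, ∃ b ∈ B, ∃ n ∈ M, x = adjoint m ∘L b ∘L n}) :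
    clspan {x : K →L[ℂ] K | ∃ m ∈ M, ∃ a ∈ A₀, ∃ n ∈ M, x = m ∘L a ∘L adjoint n} = B ∧
    A₀ = clspan {x : H →L[ℂ] H |
      ∃ m ∈ M, ∃ n ∈ M, ∃ a ∈ A, ∃ p ∈ M, ∃ q ∈ M,
        x = adjoint m ∘L (n ∘L (a ∘L (adjoint p ∘L q)))} := by
  subst hB hA₀
  set gB : Set (K →L[ℂ] K) :=
    {x : K →L[ℂ] K | ∃ m ∈ M, ∃ a ∈ A, ∃ n ∈ M, x = m ∘L a ∘L adjoint n} with hgB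
  set gA0 : Set (H →L[ℂ] H) :=
    {x : H →L[ℂ] H | ∃ m ∈ M, ∃ b ∈ clspan gB, ∃ n ∈ M, x = adjoint m ∘L b ∘L n} with hgA0
  constructor
  · -- first statement
    apply subset_antisymm
    · -- clspan gX ⊆ clspan gB
      apply clspan_le
      rintro x ⟨m, hm, a0, ha0, n, hn, rfl⟩
      -- map a0 through y ↦ m ∘L y ∘L adjoint n
      have hmain : ∀ y ∈ gA0, m ∘L y ∘L adjoint n ∈ clspan gB := by
        rintro y ⟨p, hp, b, hb, q, hq, rfl⟩
        have hinner : ∀ z ∈ gB,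
            (m ∘L adjoint p) ∘L z ∘L (q ∘L adjoint n) ∈ clspan gB := by
          rintro z ⟨r, hr, a, ha, s, hs, rfl⟩
          refine mem_clspan ⟨m ∘L (adjoint p ∘L r), hMtro m hm p hp r hr, a, ha,
            n ∘L (adjoint q ∘L s), hMtro n hn q hq s hs, ?_⟩
          simp only [adjoint_comp, adjoint_adjoint, comp_assoc]
        have := map_clspan (fun z => (m ∘L adjoint p) ∘L z ∘L (q ∘L adjoint n))
          (fun x y => by simp only [comp_add, add_comp]) (fun c x => by ext v; simp)
          (continuous_const.clm_comp (continuous_id.clm_comp continuous_const)) hinner b hb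
        simpa only [comp_assoc] using this
      exact map_clspan (fun y => m ∘L y ∘L adjoint n)
        (fun x y => by simp only [comp_add, add_comp]) (fun c x => by ext v; simp)
        (continuous_const.clm_comp (continuous_id.clm_comp continuous_const)) hmain a0 ha0
    · -- clspan gB ⊆ clspan gX  (hard direction)
      apply clspan_le
      rintro x ⟨m0, hm0, a, ha, n0, hn0, rfl⟩
      set gX : Set (K →L[ℂ] K) :=
        {x : K →L[ℂ] K | ∃ m ∈ M, ∃ a ∈ clspan gA0, ∃ n ∈ M, x = m ∘L a ∘L adjoint n} with hgX
      by_cases hm0z : m0 = 0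
      · have h0 : m0 ∘L a ∘L adjoint n0 = 0 := by rw [hm0z]; ext v; simp
        rw [h0]
        exact subset_closure (Submodule.zero_mem _)
      by_cases hn0z : n0 = 0
      · have h0 : m0 ∘L a ∘L adjoint n0 = 0 := by rw [hn0z]; ext v; simp
        rw [h0]
        exact subset_closure (Submodule.zero_mem _)
      have hTsa : IsSelfAdjoint (adjoint m0 ∘L m0) := by
        rw [IsSelfAdjoint, star_eq_adjoint, adjoint_comp, adjoint_adjoint]
      have hT'sa : IsSelfAdjoint (adjoint n0 ∘L n0) := by
        rw [IsSelfAdjoint, star_eq_adjoint, adjoint_comp, adjoint_adjoint]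
      have hpowM : ∀ k : ℕ, m0 ∘L ((adjoint m0 ∘L m0) ^ k) ∈ M := by
        intro k
        induction k with
        | zero => rw [pow_zero, show m0 ∘L (1 : H →L[ℂ] H) = m0 from by ext v; rfl]; exact hm0
        | succ k ih =>
            have heq : m0 ∘L ((adjoint m0 ∘L m0) ^ (k + 1))
                = (m0 ∘L ((adjoint m0 ∘L m0) ^ k)) ∘L (adjoint m0 ∘L m0) := by
              rw [pow_succ, mul_def]; simp only [comp_assoc]
            rw [heq]; exact hMtro _ ih m0 hm0 m0 hm0
      have hpowN : ∀ k : ℕ, n0 ∘L ((adjoint n0 ∘L n0) ^ k) ∈ M := by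
        intro k
        induction k with
        | zero => rw [pow_zero, show n0 ∘L (1 : H →L[ℂ] H) = n0 from by ext v; rfl]; exact hn0
        | succ k ih =>
            have heq : n0 ∘L ((adjoint n0 ∘L n0) ^ (k + 1))
                = (n0 ∘L ((adjoint n0 ∘L n0) ^ k)) ∘L (adjoint n0 ∘L n0) := by
              rw [pow_succ, mul_def]; simp only [comp_assoc]
            rw [heq]; exact hMtro _ ih n0 hn0 n0 hn0
      have hmidA0 : ∀ k l : ℕ,
          ((adjoint m0 ∘L m0) ^ (k + 1)) ∘L a ∘L ((adjoint n0 ∘L n0) ^ (l + 1)) ∈ clspan gA0 := by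
        intro k l
        refine mem_clspan ⟨m0, hm0,
          (m0 ∘L ((adjoint m0 ∘L m0) ^ k)) ∘L a ∘L adjoint (n0 ∘L ((adjoint n0 ∘L n0) ^ l)),
          ?_, n0, hn0, ?_⟩
        · exact mem_clspan ⟨m0 ∘L ((adjoint m0 ∘L m0) ^ k), hpowM k, a, ha,
            n0 ∘L ((adjoint n0 ∘L n0) ^ l), hpowN l, rfl⟩
        · have h1 : adjoint (n0 ∘L ((adjoint n0 ∘L n0) ^ l))
              = ((adjoint n0 ∘L n0) ^ l) ∘L adjoint n0 := by
            rw [adjoint_comp, ← star_eq_adjoint ((adjoint n0 ∘L n0) ^ l), (hT'sa.pow l).star_eq]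
          rw [h1, pow_succ' (adjoint m0 ∘L m0) k, pow_succ (adjoint n0 ∘L n0) l,
            mul_def, mul_def]
          simp only [comp_assoc]
      have hkey : ∀ s ∈ Submodule.span ℂ
            {x : H →L[ℂ] H | ∃ k : ℕ, x = (adjoint m0 ∘L m0) ^ (k + 1)},
          ∀ s' ∈ Submodule.span ℂ
            {x : H →L[ℂ] H | ∃ k : ℕ, x = (adjoint n0 ∘L n0) ^ (k + 1)},
          m0 ∘L s ∘L a ∘L s' ∘L adjoint n0 ∈ Submodule.span ℂ gX := by
        intro s hs
        induction hs using Submodule.span_induction with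
        | mem u hu =>
            intro s' hs'
            induction hs' using Submodule.span_induction with
            | mem v hv =>
                obtain ⟨k, rfl⟩ := hu
                obtain ⟨l, rfl⟩ := hv
                refine Submodule.subset_span ⟨m0, hm0,
                  ((adjoint m0 ∘L m0) ^ (k + 1)) ∘L a ∘L ((adjoint n0 ∘L n0) ^ (l + 1)),
                  hmidA0 k l, n0, hn0, by simp only [comp_assoc]⟩
            | zero =>
                have h0 : m0 ∘L u ∘L a ∘L (0 : H →L[ℂ] H) ∘L adjoint n0 = 0 := by
                  ext v; simp
                rw [h0]; exact Submodule.zero_mem _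
            | add u' v' _ _ ih1 ih2 =>
                have h0 : m0 ∘L u ∘L a ∘L (u' + v') ∘L adjoint n0
                    = m0 ∘L u ∘L a ∘L u' ∘L adjoint n0 + m0 ∘L u ∘L a ∘L v' ∘L adjoint n0 := by
                  ext w; simp
                rw [h0]; exact Submodule.add_mem _ ih1 ih2
            | smul c u' _ ih =>
                have h0 : m0 ∘L u ∘L a ∘L (c • u') ∘L adjoint n0
                    = c • (m0 ∘L u ∘L a ∘L u' ∘L adjoint n0) := by
                  ext w; simp
                rw [h0]; exact Submodule.smul_mem _ _ ih
        | zero =>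
            intro s' _
            have h0 : m0 ∘L (0 : H →L[ℂ] H) ∘L a ∘L s' ∘L adjoint n0 = 0 := by ext v; simp
            rw [h0]; exact Submodule.zero_mem _
        | add u v _ _ ih1 ih2 =>
            intro s' hs'
            have h0 : m0 ∘L (u + v) ∘L a ∘L s' ∘L adjoint n0
                = m0 ∘L u ∘L a ∘L s' ∘L adjoint n0 + m0 ∘L v ∘L a ∘L s' ∘L adjoint n0 := by
              ext w; simp
            rw [h0]; exact Submodule.add_mem _ (ih1 s' hs') (ih2 s' hs')
        | smul c u _ ih =>
            intro s' hs'
            have h0 : m0 ∘L (c • u) ∘L a ∘L s' ∘L adjoint n0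
                = c • (m0 ∘L u ∘L a ∘L s' ∘L adjoint n0) := by
              ext w; simp
            rw [h0]; exact Submodule.smul_mem _ _ (ih s' hs')
      show m0 ∘L a ∘L adjoint n0
        ∈ closure ((Submodule.span ℂ gX : Submodule ℂ (K →L[ℂ] K)) : Set (K →L[ℂ] K))
      rw [Metric.mem_closure_iff]
      intro ε hε
      have hδ₁pos : (0:ℝ) < min 1 (ε / (2 * (‖a‖ * ‖n0‖ + 1))) :=
        lt_min one_pos (by positivity)
      have hδ₂pos : (0:ℝ) < ε / (2 * ((‖m0‖ + 1) * (‖a‖ + 1))) := by positivity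
      obtain ⟨S, hSU, hSsa, hS⟩ := approx_key m0 hm0z hδ₁pos
      obtain ⟨S', hS'U, hS'sa, hS'⟩ := approx_key n0 hn0z hδ₂pos
      refine ⟨m0 ∘L S ∘L a ∘L S' ∘L adjoint n0, hkey S hSU S' hS'U, ?_⟩
      rw [dist_eq_norm]
      have h1 : adjoint (n0 - n0 ∘L S') = adjoint n0 - S' ∘L adjoint n0 := by
        rw [map_sub, adjoint_comp, ← star_eq_adjoint S', hS'sa.star_eq]
      have hdecomp : m0 ∘L a ∘L adjoint n0 - m0 ∘L S ∘L a ∘L S' ∘L adjoint n0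
          = (m0 - m0 ∘L S) ∘L (a ∘L adjoint n0)
            + (m0 ∘L S) ∘L (a ∘L adjoint (n0 - n0 ∘L S')) := by
        rw [h1, sub_comp, comp_sub, comp_sub]
        simp only [comp_assoc]
        abel
      rw [hdecomp]
      have hbS : ‖m0 ∘L S‖ ≤ ‖m0‖ + 1 := by
        have h2 : m0 ∘L S = m0 - (m0 - m0 ∘L S) := by abel
        rw [h2]
        calc ‖m0 - (m0 - m0 ∘L S)‖ ≤ ‖m0‖ + ‖m0 - m0 ∘L S‖ := norm_sub_le _ _
          _ ≤ ‖m0‖ + 1 := by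
              have := hS.trans_le (min_le_left _ _)
              linarith
      have ht1 : ‖(m0 - m0 ∘L S) ∘L (a ∘L adjoint n0)‖
          ≤ min 1 (ε / (2 * (‖a‖ * ‖n0‖ + 1))) * (‖a‖ * ‖n0‖) := by
        calc ‖(m0 - m0 ∘L S) ∘L (a ∘L adjoint n0)‖
            ≤ ‖m0 - m0 ∘L S‖ * ‖a ∘L adjoint n0‖ := opNorm_comp_le _ _
          _ ≤ ‖m0 - m0 ∘L S‖ * (‖a‖ * ‖n0‖) := by
              refine mul_le_mul_of_nonneg_left ?_ (norm_nonneg _)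
              calc ‖a ∘L adjoint n0‖ ≤ ‖a‖ * ‖adjoint n0‖ := opNorm_comp_le _ _
                _ = ‖a‖ * ‖n0‖ := by rw [adjoint.norm_map]
          _ ≤ _ := mul_le_mul_of_nonneg_right hS.le (by positivity)
      have ht2 : ‖(m0 ∘L S) ∘L (a ∘L adjoint (n0 - n0 ∘L S'))‖
          ≤ (‖m0‖ + 1) * (‖a‖ * (ε / (2 * ((‖m0‖ + 1) * (‖a‖ + 1))))) := by
        calc ‖(m0 ∘L S) ∘L (a ∘L adjoint (n0 - n0 ∘L S'))‖
            ≤ ‖m0 ∘L S‖ * ‖a ∘L adjoint (n0 - n0 ∘L S')‖ := opNorm_comp_le _ _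
          _ ≤ (‖m0‖ + 1) * (‖a‖ * (ε / (2 * ((‖m0‖ + 1) * (‖a‖ + 1))))) := by
              refine mul_le_mul hbS ?_ (norm_nonneg _) (by positivity)
              calc ‖a ∘L adjoint (n0 - n0 ∘L S')‖
                  ≤ ‖a‖ * ‖adjoint (n0 - n0 ∘L S')‖ := opNorm_comp_le _ _
                _ ≤ ‖a‖ * (ε / (2 * ((‖m0‖ + 1) * (‖a‖ + 1)))) := by
                    rw [adjoint.norm_map]
                    exact mul_le_mul_of_nonneg_left hS'.le (norm_nonneg _)
      have harith : min 1 (ε / (2 * (‖a‖ * ‖n0‖ + 1))) * (‖a‖ * ‖n0‖)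
          + (‖m0‖ + 1) * (‖a‖ * (ε / (2 * ((‖m0‖ + 1) * (‖a‖ + 1))))) < ε := by
        have f1 : min 1 (ε / (2 * (‖a‖ * ‖n0‖ + 1))) * (2 * (‖a‖ * ‖n0‖ + 1)) ≤ ε := by
          rw [← le_div_iff₀ (by positivity)]
          exact min_le_right _ _
        have f2 : (ε / (2 * ((‖m0‖ + 1) * (‖a‖ + 1)))) * (2 * ((‖m0‖ + 1) * (‖a‖ + 1))) = ε := by
          field_simp
        nlinarith [hδ₁pos, hδ₂pos, norm_nonneg a, norm_nonneg n0, norm_nonneg m0,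
          mul_pos hδ₂pos (show (0:ℝ) < ‖m0‖ + 1 by positivity),
          mul_nonneg (norm_nonneg a) (norm_nonneg n0)]
      calc ‖(m0 - m0 ∘L S) ∘L (a ∘L adjoint n0)
            + (m0 ∘L S) ∘L (a ∘L adjoint (n0 - n0 ∘L S'))‖
          ≤ ‖(m0 - m0 ∘L S) ∘L (a ∘L adjoint n0)‖
            + ‖(m0 ∘L S) ∘L (a ∘L adjoint (n0 - n0 ∘L S'))‖ := norm_add_le _ _
        _ ≤ min 1 (ε / (2 * (‖a‖ * ‖n0‖ + 1))) * (‖a‖ * ‖n0‖)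
            + (‖m0‖ + 1) * (‖a‖ * (ε / (2 * ((‖m0‖ + 1) * (‖a‖ + 1))))) := add_le_add ht1 ht2
        _ < ε := harith
  · -- second statement
    apply subset_antisymm
    · apply clspan_le
      rintro x ⟨m, hm, b, hb, n, hn, rfl⟩
      have hmain : ∀ z ∈ gB, adjoint m ∘L z ∘L n ∈ clspan
          {x : H →L[ℂ] H | ∃ m ∈ M, ∃ n ∈ M, ∃ a ∈ A, ∃ p ∈ M, ∃ q ∈ M,
            x = adjoint m ∘L (n ∘L (a ∘L (adjoint p ∘L q)))} := by
        rintro z ⟨p, hp, a, ha, q, hq, rfl⟩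
        refine mem_clspan ⟨m, hm, p, hp, a, ha, q, hq, n, hn, ?_⟩
        simp only [comp_assoc]
      exact map_clspan (fun z => adjoint m ∘L z ∘L n)
        (fun x y => by simp only [comp_add, add_comp]) (fun c x => by ext v; simp)
        (continuous_const.clm_comp (continuous_id.clm_comp continuous_const)) hmain b hb
    · apply clspan_le
      rintro x ⟨m, hm, n, hn, a, ha, p, hp, q, hq, rfl⟩
      refine mem_clspan ⟨m, hm, n ∘L a ∘L adjoint p, ?_, q, hq, ?_⟩
      · exact mem_clspan ⟨n, hn, a, ha, p, hp, rfl⟩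
      · simp only [comp_assoc]
end

section
/- Let A ⊆ B(H) be an operator algebra with contractive approximate identity and M ⊆ B(H,K) a σ-TRO with M* M A ⊆ A. Suppose additionally that the closed span of M* M A equals the closed span of A M* M (so Y = closed span of M A is a doubly σ-TRO-A-rigged module). Then with B = closed span of M A M*, M₁ = M* and M₂ = closed span of M M*, one has B = closed span of M₂* Y M₁ and Y = closed span of M₂ B M₁*; i.e., Y and B are σ-TRO equivalent. -/
open Filter Topology ContinuousLinearMap
set_option maxHeartbeats 1000000



/-- A σ-TRO: a norm-closed linear subspace `M` with `M M* M ⊆ M` admitting sequences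
`(m i)`, `(n j)` in `M` with `∑ᵢ mᵢ mᵢ* m = m` and `∑ⱼ m nⱼ* nⱼ = m` for all `m ∈ M`,
with all partial sums `∑ mᵢ mᵢ*`, `∑ nⱼ* nⱼ` of norm at most 1. -/
structure IsSigmaTRO {H K : Type*} [NormedAddCommGroup H] [InnerProductSpace ℂ H]
    [CompleteSpace H] [NormedAddCommGroup K] [InnerProductSpace ℂ K] [CompleteSpace K]
    (M : Set (H →L[ℂ] K)) : Prop where
  isClosed : IsClosed M
  subspace : ∃ M' : Submodule ℂ (H →L[ℂ] K), M = M'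
  tro : ∀ x ∈ M, ∀ y ∈ M, ∀ z ∈ M, x ∘L (adjoint y ∘L z) ∈ M
  left_seq : ∃ m : ℕ → (H →L[ℂ] K), (∀ i, m i ∈ M) ∧
    (∀ n, ‖∑ i ∈ Finset.range n, m i ∘L adjoint (m i)‖ ≤ 1) ∧
    (∀ x ∈ M, Tendsto (fun n => ∑ i ∈ Finset.range n, (m i ∘L adjoint (m i)) ∘L x)
      atTop (𝓝 x))
  right_seq : ∃ m : ℕ → (H →L[ℂ] K), (∀ j, m j ∈ M) ∧
    (∀ t, ‖∑ j ∈ Finset.range t, adjoint (m j) ∘L m j‖ ≤ 1) ∧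
    (∀ x ∈ M, Tendsto (fun t => ∑ j ∈ Finset.range t, x ∘L (adjoint (m j) ∘L m j))
      atTop (𝓝 x))





section helpers
variable {E F : Type*} [NormedAddCommGroup E] [NormedSpace ℂ E]
  [NormedAddCommGroup F] [NormedSpace ℂ F]

/-- closed span as a submodule -/
noncomputable def clspanSub (S : Set E) : Submodule ℂ E :=
  (Submodule.span ℂ S).topologicalClosure

lemma clspanSub_coe (S : Set E) :
    (clspanSub S : Set E) = closure ((Submodule.span ℂ S : Submodule ℂ E) : Set E) := rfl

lemma clspanSub_isClosed (S : Set E) : IsClosed ((clspanSub S : Submodule ℂ E) : Set E) :=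
  (Submodule.span ℂ S).isClosed_topologicalClosure

lemma subset_clspanSub (S : Set E) : S ⊆ (clspanSub S : Set E) :=
  fun x hx => subset_closure (Submodule.subset_span hx)

lemma span_subset_clspanSub (S : Set E) :
    ((Submodule.span ℂ S : Submodule ℂ E) : Set E) ⊆ (clspanSub S : Set E) := subset_closure

lemma clspanSub_min {S : Set E} {N : Submodule ℂ E} (hN : IsClosed (N : Set E))
    (h : S ⊆ N) : ((clspanSub S : Submodule ℂ E) : Set E) ⊆ N :=
  closure_minimal (by exact_mod_cast Submodule.span_le.mpr h) hN

lemma mem_of_clspan (f : E → F) (hadd : ∀ a b, f (a + b) = f a + f b)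
    (hsmul : ∀ (c : ℂ) a, ∃ c' : ℂ, f (c • a) = c' • f a)
    (hcont : Continuous f) (S : Set E) (N : Submodule ℂ F) (hN : IsClosed (N : Set F))
    (h : ∀ s ∈ S, f s ∈ N) :
    ∀ x ∈ (clspanSub S : Set E), f x ∈ N := by
  have h0 : f 0 = 0 := by
    have h00 := hadd 0 0
    rw [add_zero] at h00
    have : f 0 + 0 = f 0 + f 0 := by rw [add_zero]; exact h00
    exact ((add_right_injective (f 0)) this).symm
  have hspan : ∀ x ∈ Submodule.span ℂ S, f x ∈ N := by
    intro x hx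
    induction hx using Submodule.span_induction with
    | mem s hs => exact h s hs
    | zero => rw [h0]; exact N.zero_mem
    | add a b _ _ iha ihb => rw [hadd]; exact N.add_mem iha ihb
    | smul c a _ ih => obtain ⟨c', hc'⟩ := hsmul c a; rw [hc']; exact N.smul_mem c' ih
  intro x hx
  exact closure_minimal (fun y hy => hspan y hy) (hN.preimage hcont) hx

lemma tendsto_of_clspan (g : ℕ → E →L[ℂ] E) (hC : ∀ n, ‖g n‖ ≤ 1) (S : Set E)
    (h : ∀ s ∈ S, Tendsto (fun n => g n s) atTop (𝓝 s)) :
    ∀ x ∈ (clspanSub S : Set E), Tendsto (fun n => g n x) atTop (𝓝 x) := by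
  have hspan : ∀ s ∈ Submodule.span ℂ S, Tendsto (fun n => g n s) atTop (𝓝 s) := by
    intro s hs
    induction hs using Submodule.span_induction with
    | mem s hs => exact h s hs
    | zero => simpa using tendsto_const_nhds
    | add a b _ _ iha ihb => simpa [map_add] using iha.add ihb
    | smul c a _ ih => simpa [map_smul] using ih.const_smul c
  intro x hx
  rw [Metric.tendsto_atTop]
  intro ε hε
  have hx' := hx
  rw [clspanSub_coe, Metric.mem_closure_iff] at hx'
  obtain ⟨s, hs, hdist⟩ := hx' (ε/3) (by linarith)
  obtain ⟨N, hN⟩ := Metric.tendsto_atTop.mp (hspan s hs) (ε/3) (by linarith)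
  refine ⟨N, fun n hn => ?_⟩
  have h1 : ‖g n x - g n s‖ ≤ ‖x - s‖ := by
    calc ‖g n x - g n s‖ = ‖g n (x - s)‖ := by rw [map_sub]
    _ ≤ ‖g n‖ * ‖x - s‖ := (g n).le_opNorm _
    _ ≤ 1 * ‖x - s‖ := by
        exact mul_le_mul_of_nonneg_right (hC n) (norm_nonneg _)
    _ = ‖x - s‖ := one_mul _
  have := hN n hn
  rw [dist_eq_norm] at *
  calc ‖g n x - x‖ ≤ ‖g n x - g n s‖ + ‖g n s - s‖ + ‖s - x‖ := by
        have := norm_add₃_le (a := g n x - g n s) (b := g n s - s) (c := s - x)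
        simpa using this
  _ < ε/3 + ε/3 + ε/3 := by
      have hsx : ‖s - x‖ < ε/3 := by rwa [norm_sub_rev]
      exact add_lt_add (add_lt_add_of_le_of_lt (le_trans h1 hdist.le) this) hsx
  _ = ε := by ring

lemma mem_of_tendsto_sub {N : Submodule ℂ E} (hN : IsClosed (N : Set E)) {f : ℕ → E} {x : E}
    (hf : ∀ n, f n ∈ N) (h : Tendsto f atTop (𝓝 x)) : x ∈ N :=
  hN.mem_of_tendsto h (Filter.Eventually.of_forall hf)

end helpers


section sqrt
variable {K : Type*} [NormedAddCommGroup K] [InnerProductSpace ℂ K] [CompleteSpace K]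

lemma isPositive_comp_adjoint {H : Type*} [NormedAddCommGroup H] [InnerProductSpace ℂ H]
    [CompleteSpace H] (m : H →L[ℂ] K) : (0 : K →L[ℂ] K) ≤ m ∘L adjoint m := by
  rw [nonneg_iff_isPositive]
  simpa [ContinuousLinearMap.one_def] using (isPositive_one (E := H) (𝕜 := ℂ)).conj_adjoint m

open NonUnitalStarAlgebra in
lemma cfcnHom_mem {a : K →L[ℂ] K} (ha : IsSelfAdjoint a)
    (S : NonUnitalStarSubalgebra ℝ (K →L[ℂ] K)) (hS : IsClosed (S : Set (K →L[ℂ] K)))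
    (haS : a ∈ S) (f : ContinuousMapZero (quasispectrum ℝ a) ℝ) :
    cfcₙHom ha f ∈ S := by
  have h₁ := (cfcₙHom_isClosedEmbedding ha).continuous.range_subset_closure_image_dense
    (ContinuousMapZero.adjoin_id_dense (s := quasispectrum ℝ a)) ⟨f, rfl⟩
  rw [← SetLike.mem_coe]
  refine closure_minimal ?_ hS h₁
  rw [← NonUnitalStarSubalgebra.coe_map, SetLike.coe_subset_coe, NonUnitalStarSubalgebra.map_le]
  apply adjoin_le
  rw [Set.singleton_subset_iff, SetLike.mem_coe, NonUnitalStarSubalgebra.mem_comap]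
  show cfcₙHom (R := ℝ) ha (ContinuousMapZero.id (quasispectrum ℝ a)) ∈ S
  have hid : cfcₙHom (R := ℝ) ha (ContinuousMapZero.id (quasispectrum ℝ a)) = a := cfcₙHom_id ha
  rw [hid]
  exact haS

/-- square root of a positive operator -/
noncomputable def opSqrt (a : K →L[ℂ] K) : K →L[ℂ] K := cfcₙ Real.sqrt a

lemma opSqrt_isSelfAdjoint (a : K →L[ℂ] K) : IsSelfAdjoint (opSqrt a) :=
  cfcₙ_predicate Real.sqrt a

lemma opSqrt_mul_self {a : K →L[ℂ] K} (ha : 0 ≤ a) : opSqrt a * opSqrt a = a := by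
  have hsa : IsSelfAdjoint a := IsSelfAdjoint.of_nonneg ha
  rw [opSqrt, ← cfcₙ_mul Real.sqrt Real.sqrt a
    (Real.continuous_sqrt.continuousOn) Real.sqrt_zero
    (Real.continuous_sqrt.continuousOn) Real.sqrt_zero]
  have h1 : cfcₙ (fun x => Real.sqrt x * Real.sqrt x) a = cfcₙ (id : ℝ → ℝ) a := by
    apply cfcₙ_congr
    intro x hx
    exact Real.mul_self_sqrt (quasispectrum_nonneg_of_nonneg a ha x hx)
  rw [h1, cfcₙ_id ℝ a]

lemma opSqrt_mem {a : K →L[ℂ] K} (ha : IsSelfAdjoint a)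
    (S : NonUnitalStarSubalgebra ℝ (K →L[ℂ] K)) (hS : IsClosed (S : Set (K →L[ℂ] K)))
    (haS : a ∈ S) : opSqrt a ∈ S := by
  rw [opSqrt, cfcₙ_apply Real.sqrt a (Real.continuous_sqrt.continuousOn) Real.sqrt_zero ha]
  exact cfcnHom_mem ha S hS haS _

end sqrt


section part1
variable {H K : Type*} [NormedAddCommGroup H] [InnerProductSpace ℂ H] [CompleteSpace H]
  [NormedAddCommGroup K] [InnerProductSpace ℂ K] [CompleteSpace K]

lemma sigmaTRO_adjoint {M : Set (H →L[ℂ] K)} (hM : IsSigmaTRO M) :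
    IsSigmaTRO {x : K →L[ℂ] H | ∃ m ∈ M, x = adjoint m} := by
  obtain ⟨M', hM'⟩ := hM.subspace
  have hzero : (0 : H →L[ℂ] K) ∈ M := by rw [hM']; exact M'.zero_mem
  have hadd : ∀ x ∈ M, ∀ y ∈ M, x + y ∈ M := by
    intro x hx y hy; rw [hM'] at *; exact M'.add_mem hx hy
  have hsmul : ∀ (c : ℂ), ∀ x ∈ M, c • x ∈ M := by
    intro c x hx; rw [hM'] at *; exact M'.smul_mem c hx
  have hpre : {x : K →L[ℂ] H | ∃ m ∈ M, x = adjoint m} = adjoint ⁻¹' M := by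
    ext x
    constructor
    · rintro ⟨m, hm, rfl⟩
      simpa [adjoint_adjoint] using hm
    · intro hx
      exact ⟨adjoint x, hx, (adjoint_adjoint x).symm⟩
  constructor
  · rw [hpre]
    exact hM.isClosed.preimage (LinearIsometryEquiv.continuous _)
  · refine ⟨{ carrier := {x : K →L[ℂ] H | ∃ m ∈ M, x = adjoint m}
              add_mem' := ?_
              zero_mem' := ⟨0, hzero, by simp⟩
              smul_mem' := ?_ }, rfl⟩
    · rintro x y ⟨m, hm, rfl⟩ ⟨m', hm', rfl⟩
      exact ⟨m + m', hadd m hm m' hm', by simp [map_add]⟩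
    · rintro c x ⟨m, hm, rfl⟩
      refine ⟨(starRingEnd ℂ c) • m, hsmul _ m hm, ?_⟩
      rw [map_smulₛₗ]
      simp
  · rintro x ⟨mx, hmx, rfl⟩ y ⟨my, hmy, rfl⟩ z ⟨mz, hmz, rfl⟩
    refine ⟨mz ∘L (adjoint my ∘L mx), hM.tro mz hmz my hmy mx hmx, ?_⟩
    simp [adjoint_comp, adjoint_adjoint, comp_assoc]
  · obtain ⟨n, hn, hnnorm, hnconv⟩ := hM.right_seq
    refine ⟨fun j => adjoint (n j), fun j => ⟨n j, hn j, rfl⟩, ?_, ?_⟩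
    · intro t
      have : ∀ j, adjoint (n j) ∘L adjoint (adjoint (n j)) = adjoint (n j) ∘L n j := by
        intro j; rw [adjoint_adjoint]
      simpa [this] using hnnorm t
    · rintro x ⟨m, hm, rfl⟩
      have key : ∀ t, ∑ j ∈ Finset.range t, (adjoint (n j) ∘L adjoint (adjoint (n j))) ∘L
          adjoint m = adjoint (∑ j ∈ Finset.range t, m ∘L (adjoint (n j) ∘L n j)) := by
        intro t
        rw [map_sum]
        apply Finset.sum_congr rfl
        intro j _
        rw [adjoint_adjoint, adjoint_comp, adjoint_comp, adjoint_adjoint, comp_assoc]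
      have hconv : Tendsto (fun t => adjoint (∑ j ∈ Finset.range t, m ∘L (adjoint (n j) ∘L n j)))
          atTop (𝓝 (adjoint m)) :=
        ((ContinuousLinearMap.adjoint (𝕜 := ℂ) (E := H) (F := K)).continuous.tendsto m).comp
          (hnconv m hm)
      simp only [key]
      exact hconv
  · obtain ⟨ml, hml, hmlnorm, hmlconv⟩ := hM.left_seq
    refine ⟨fun i => adjoint (ml i), fun i => ⟨ml i, hml i, rfl⟩, ?_, ?_⟩
    · intro t
      have : ∀ i, adjoint (adjoint (ml i)) ∘L adjoint (ml i) = ml i ∘L adjoint (ml i) := by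
        intro i; rw [adjoint_adjoint]
      simpa [this] using hmlnorm t
    · rintro x ⟨m, hm, rfl⟩
      have key : ∀ t, ∑ i ∈ Finset.range t, adjoint m ∘L
          (adjoint (adjoint (ml i)) ∘L adjoint (ml i))
          = adjoint (∑ i ∈ Finset.range t, (ml i ∘L adjoint (ml i)) ∘L m) := by
        intro t
        rw [map_sum]
        apply Finset.sum_congr rfl
        intro i _
        rw [adjoint_adjoint, adjoint_comp, adjoint_comp, adjoint_adjoint]
      have hconv : Tendsto (fun t => adjoint (∑ i ∈ Finset.range t, (ml i ∘L adjoint (ml i)) ∘L m))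
          atTop (𝓝 (adjoint m)) :=
        ((ContinuousLinearMap.adjoint (𝕜 := ℂ) (E := H) (F := K)).continuous.tendsto m).comp
          (hmlconv m hm)
      simp only [key]
      exact hconv

end part1

section part2
variable {H K : Type*} [NormedAddCommGroup H] [InnerProductSpace ℂ H] [CompleteSpace H]
  [NormedAddCommGroup K] [InnerProductSpace ℂ K] [CompleteSpace K]

lemma adjoint_comp_adjoint_self (m : H →L[ℂ] K) :
    adjoint (m ∘L adjoint m) = m ∘L adjoint m := by
  rw [adjoint_comp, adjoint_adjoint]

lemma compL_op_norm_le {E F G : Type*} [NormedAddCommGroup E] [NormedSpace ℂ E]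
    [NormedAddCommGroup F] [NormedSpace ℂ F] [NormedAddCommGroup G]
    [NormedSpace ℂ G] {c : F →L[ℂ] G} (hc : ‖c‖ ≤ 1) :
    ‖ContinuousLinearMap.compL ℂ E F G c‖ ≤ 1 := by
  refine ContinuousLinearMap.opNorm_le_bound _ zero_le_one fun w => ?_
  calc ‖ContinuousLinearMap.compL ℂ E F G c w‖ = ‖c ∘L w‖ := rfl
  _ ≤ ‖c‖ * ‖w‖ := ContinuousLinearMap.opNorm_comp_le c w
  _ ≤ 1 * ‖w‖ := mul_le_mul_of_nonneg_right hc (norm_nonneg w)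

lemma flip_compL_op_norm_le {E F G : Type*} [NormedAddCommGroup E] [NormedSpace ℂ E]
    [NormedAddCommGroup F] [NormedSpace ℂ F] [NormedAddCommGroup G]
    [NormedSpace ℂ G] {c : E →L[ℂ] F} (hc : ‖c‖ ≤ 1) :
    ‖(ContinuousLinearMap.compL ℂ E F G).flip c‖ ≤ 1 := by
  refine ContinuousLinearMap.opNorm_le_bound _ zero_le_one fun w => ?_
  calc ‖(ContinuousLinearMap.compL ℂ E F G).flip c w‖ = ‖w ∘L c‖ := rfl
  _ ≤ ‖w‖ * ‖c‖ := ContinuousLinearMap.opNorm_comp_le w c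
  _ ≤ ‖w‖ * 1 := mul_le_mul_of_nonneg_left hc (norm_nonneg w)
  _ = 1 * ‖w‖ := by ring

lemma sigmaTRO_M2 {M : Set (H →L[ℂ] K)} (hM : IsSigmaTRO M) :
    IsSigmaTRO ((clspanSub {x : K →L[ℂ] K | ∃ m ∈ M, ∃ n ∈ M, x = m ∘L adjoint n} :
      Submodule ℂ (K →L[ℂ] K)) : Set (K →L[ℂ] K)) := by
  set T : Set (K →L[ℂ] K) := {x : K →L[ℂ] K | ∃ m ∈ M, ∃ n ∈ M, x = m ∘L adjoint n} with hT
  set N : Submodule ℂ (K →L[ℂ] K) := clspanSub T with hN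
  have hNc : IsClosed (N : Set (K →L[ℂ] K)) := clspanSub_isClosed T
  have hTmul : ∀ x ∈ T, ∀ y ∈ T, x ∘L y ∈ T := by
    rintro x ⟨m, hm, n, hn, rfl⟩ y ⟨m', hm', n', hn', rfl⟩
    refine ⟨m ∘L (adjoint n ∘L m'), hM.tro m hm n hn m' hm', n', hn', ?_⟩
    simp [comp_assoc]
  have hTstar : ∀ x ∈ T, adjoint x ∈ T := by
    rintro x ⟨m, hm, n, hn, rfl⟩
    exact ⟨n, hn, m, hm, by rw [adjoint_comp, adjoint_adjoint]⟩
  -- multiplication stability on N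
  have mulN : ∀ x ∈ (N : Set (K →L[ℂ] K)), ∀ y ∈ (N : Set (K →L[ℂ] K)), x ∘L y ∈ N := by
    have step1 : ∀ x ∈ T, ∀ y ∈ (N : Set (K →L[ℂ] K)), x ∘L y ∈ N := by
      intro x hx
      exact mem_of_clspan (fun y => x ∘L y) (fun a b => by simp)
        (fun c a => ⟨c, by simp⟩)
        (ContinuousLinearMap.compL ℂ K K K x).continuous T N hNc
        (fun s hs => subset_clspanSub T (hTmul x hx s hs))
    intro x hx y hy
    refine mem_of_clspan (fun x => x ∘L y) (fun a b => by simp)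
      (fun c a => ⟨c, by simp⟩)
      ((ContinuousLinearMap.compL ℂ K K K).flip y).continuous T N hNc
      (fun s hs => step1 s hs y hy) x hx
  have starN : ∀ x ∈ (N : Set (K →L[ℂ] K)), adjoint x ∈ N := by
    refine mem_of_clspan (fun x => adjoint x) (fun a b => by simp)
      (fun c a => ⟨starRingEnd ℂ c, by show adjoint (c • a) = (starRingEnd ℂ) c • adjoint a; rw [← star_eq_adjoint, ← star_eq_adjoint, star_smul]; rfl⟩)
      (ContinuousLinearMap.adjoint (𝕜 := ℂ) (E := K) (F := K)).continuous T N hNc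
      (fun s hs => subset_clspanSub T (hTstar s hs))
  obtain ⟨ml, hml, hmlnorm, hmlconv⟩ := hM.left_seq
  set a : ℕ → (K →L[ℂ] K) := fun i => ml i ∘L adjoint (ml i) with ha
  have haT : ∀ i, a i ∈ T := fun i => ⟨ml i, hml i, ml i, hml i, rfl⟩
  have haN : ∀ i, a i ∈ N := fun i => subset_clspanSub T (haT i)
  have hapos : ∀ i, (0 : K →L[ℂ] K) ≤ a i := fun i => isPositive_comp_adjoint (ml i)
  have hasa : ∀ i, IsSelfAdjoint (a i) := fun i => IsSelfAdjoint.of_nonneg (hapos i)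
  set u : ℕ → (K →L[ℂ] K) := fun i => opSqrt (a i) with hu
  have husa : ∀ i, IsSelfAdjoint (u i) := fun i => opSqrt_isSelfAdjoint (a i)
  have huadj : ∀ i, adjoint (u i) = u i := fun i => by
    rw [← star_eq_adjoint]; exact (husa i)
  have husq : ∀ i, u i ∘L adjoint (u i) = a i := fun i => by
    rw [huadj i, ← mul_def, opSqrt_mul_self (hapos i)]
  -- the ℝ-star-subalgebra structure on N
  set NR : NonUnitalStarSubalgebra ℝ (K →L[ℂ] K) :=
    { carrier := (N : Set (K →L[ℂ] K))
      add_mem' := fun hx hy => N.add_mem hx hy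
      zero_mem' := N.zero_mem
      mul_mem' := fun {x y} hx hy => mulN x hx y hy
      smul_mem' := by
        intro r x hx
        have h1 : (r : ℂ) • x = r • x := by
          rw [show ((r : ℝ) : ℂ) = r • (1 : ℂ) by simp [Complex.real_smul], smul_assoc, one_smul]
        rw [← h1]
        exact N.smul_mem _ hx
      star_mem' := by
        intro x hx
        rw [star_eq_adjoint]
        exact starN x hx } with hNR
  have huN : ∀ i, u i ∈ N := by
    intro i
    have := opSqrt_mem (hasa i) NR hNc (haN i)
    exact this
  -- partial sums of a
  have hsum_eq : ∀ t, ∑ i ∈ Finset.range t, u i ∘L adjoint (u i)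
      = ∑ i ∈ Finset.range t, a i := by
    intro t; exact Finset.sum_congr rfl fun i _ => husq i
  have hanorm : ∀ t, ‖∑ i ∈ Finset.range t, a i‖ ≤ 1 := fun t => hmlnorm t
  -- convergence facts
  have hconvL : ∀ x ∈ (N : Set (K →L[ℂ] K)),
      Tendsto (fun t => (∑ i ∈ Finset.range t, a i) ∘L x) atTop (𝓝 x) := by
    have := tendsto_of_clspan
      (g := fun t => ContinuousLinearMap.compL ℂ K K K (∑ i ∈ Finset.range t, a i))
      (fun t => compL_op_norm_le (hanorm t)) T ?_
    · intro x hx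
      exact this x hx
    · rintro s ⟨m, hm, n, hn, rfl⟩
      have key : ∀ t, ContinuousLinearMap.compL ℂ K K K (∑ i ∈ Finset.range t, a i)
          (m ∘L adjoint n)
          = (∑ i ∈ Finset.range t, a i ∘L m) ∘L adjoint n := by
        intro t
        rw [compL_apply, ← comp_assoc]
        congr 1
        exact map_sum ((ContinuousLinearMap.compL ℂ H K K).flip m) a (Finset.range t)
      simp only [key]
      have hm' : Tendsto (fun t => ∑ i ∈ Finset.range t, a i ∘L m) atTop (𝓝 m) := by
        have := hmlconv m hm
        simpa [ha] using this
      exact (((ContinuousLinearMap.compL ℂ K H K).flip (ContinuousLinearMap.adjoint (𝕜 := ℂ) (E := H) (F := K) n)).continuous.tendsto m).comp hm'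
  have hconvR : ∀ x ∈ (N : Set (K →L[ℂ] K)),
      Tendsto (fun t => x ∘L (∑ i ∈ Finset.range t, a i)) atTop (𝓝 x) := by
    have := tendsto_of_clspan
      (g := fun t => (ContinuousLinearMap.compL ℂ K K K).flip (∑ i ∈ Finset.range t, a i))
      (fun t => flip_compL_op_norm_le (hanorm t)) T ?_
    · intro x hx
      exact this x hx
    · rintro s ⟨m, hm, n, hn, rfl⟩
      have key : ∀ t, (ContinuousLinearMap.compL ℂ K K K).flip (∑ i ∈ Finset.range t, a i)
          (m ∘L adjoint n)
          = m ∘L adjoint ((∑ i ∈ Finset.range t, a i ∘L n)) := by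
        intro t
        have h2 : adjoint ((∑ i ∈ Finset.range t, a i ∘L n))
            = adjoint n ∘L (∑ i ∈ Finset.range t, a i) := by
          rw [map_sum]
          have h4 : adjoint n ∘L (∑ i ∈ Finset.range t, a i)
              = ∑ i ∈ Finset.range t, adjoint n ∘L a i :=
            map_sum (ContinuousLinearMap.compL ℂ K K H (ContinuousLinearMap.adjoint (𝕜 := ℂ) (E := H) (F := K) n)) a (Finset.range t)
          rw [h4]
          refine Finset.sum_congr rfl fun i _ => ?_
          rw [adjoint_comp]
          congr 1
          rw [← star_eq_adjoint]
          exact hasa i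
        rw [h2]
        show (m ∘L adjoint n) ∘L (∑ i ∈ Finset.range t, a i) = _
        rw [comp_assoc]
      simp only [key]
      have hn' : Tendsto (fun t => ∑ i ∈ Finset.range t, a i ∘L n) atTop (𝓝 n) := by
        have := hmlconv n hn
        simpa [ha] using this
      have hadj : Tendsto (fun t => adjoint (∑ i ∈ Finset.range t, a i ∘L n)) atTop
          (𝓝 (adjoint n)) :=
        ((ContinuousLinearMap.adjoint (𝕜 := ℂ) (E := H) (F := K)).continuous.tendsto n).comp hn'
      exact ((ContinuousLinearMap.compL ℂ K H K m).continuous.tendsto (adjoint n)).comp hadj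
  -- assemble
  refine ⟨hNc, ⟨N, rfl⟩, ?_, ?_, ?_⟩
  · intro x hx y hy z hz
    have h1 : x ∘L adjoint y ∈ N := mulN x hx (adjoint y) (starN y hy)
    have h2 : (x ∘L adjoint y) ∘L z ∈ N := mulN _ h1 z hz
    rw [← comp_assoc]
    exact h2
  · refine ⟨u, huN, ?_, ?_⟩
    · intro t
      rw [hsum_eq t]
      exact hanorm t
    · intro x hx
      have key : ∀ t, ∑ i ∈ Finset.range t, (u i ∘L adjoint (u i)) ∘L x
          = (∑ i ∈ Finset.range t, a i) ∘L x := by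
        intro t
        have h4 : (∑ i ∈ Finset.range t, a i) ∘L x
            = ∑ i ∈ Finset.range t, a i ∘L x :=
          map_sum ((ContinuousLinearMap.compL ℂ K K K).flip x) a (Finset.range t)
        rw [h4]
        exact Finset.sum_congr rfl fun i _ => by rw [husq i]
      simp only [key]
      exact hconvL x hx
  · refine ⟨u, huN, ?_, ?_⟩
    · intro t
      have h5 : ∀ i, adjoint (u i) ∘L u i = a i := by
        intro i
        rw [huadj i, ← husq i, huadj i]
      simp only [h5]
      exact hanorm t
    · intro x hx
      have key : ∀ t, ∑ j ∈ Finset.range t, x ∘L (adjoint (u j) ∘L u j)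
          = x ∘L (∑ j ∈ Finset.range t, a j) := by
        intro t
        have h4 : x ∘L (∑ j ∈ Finset.range t, a j)
            = ∑ j ∈ Finset.range t, x ∘L a j :=
          map_sum (ContinuousLinearMap.compL ℂ K K K x) a (Finset.range t)
        rw [h4]
        refine Finset.sum_congr rfl fun j _ => ?_
        rw [huadj j, ← husq j, huadj j]
      simp only [key]
      exact hconvR x hx

end part2



section glue
variable {H K : Type*} [NormedAddCommGroup H] [InnerProductSpace ℂ H] [CompleteSpace H]
  [NormedAddCommGroup K] [InnerProductSpace ℂ K] [CompleteSpace K]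

lemma clspan_eq (S : Set (H →L[ℂ] K)) :
    clspan S = ((clspanSub S : Submodule ℂ (H →L[ℂ] K)) : Set (H →L[ℂ] K)) :=
  (clspanSub_coe S).symm

lemma adjoint_smul' (c : ℂ) (x : H →L[ℂ] K) :
    adjoint (c • x) = (starRingEnd ℂ) c • adjoint x := by
  rw [map_smulₛₗ]

lemma sum_comp' {α E F G : Type*} [NormedAddCommGroup E] [NormedSpace ℂ E]
    [NormedAddCommGroup F] [NormedSpace ℂ F] [NormedAddCommGroup G] [NormedSpace ℂ G]
    (s : Finset α) (f : α → F →L[ℂ] G) (c : E →L[ℂ] F) :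
    (∑ i ∈ s, f i) ∘L c = ∑ i ∈ s, f i ∘L c := by
  induction s using Finset.cons_induction with
  | empty => simp
  | cons a s ha ih => rw [Finset.sum_cons, Finset.sum_cons, add_comp, ih]

lemma comp_sum' {α E F G : Type*} [NormedAddCommGroup E] [NormedSpace ℂ E]
    [NormedAddCommGroup F] [NormedSpace ℂ F] [NormedAddCommGroup G] [NormedSpace ℂ G]
    (s : Finset α) (c : F →L[ℂ] G) (f : α → E →L[ℂ] F) :
    c ∘L (∑ i ∈ s, f i) = ∑ i ∈ s, c ∘L f i := by
  induction s using Finset.cons_induction with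
  | empty => simp
  | cons a s ha ih => rw [Finset.sum_cons, Finset.sum_cons, comp_add, ih]

lemma tendsto_comp_right_of {E F G : Type*} [NormedAddCommGroup E] [NormedSpace ℂ E]
    [NormedAddCommGroup F] [NormedSpace ℂ F] [NormedAddCommGroup G] [NormedSpace ℂ G]
    {f : ℕ → F →L[ℂ] G} {L : F →L[ℂ] G} (h : Tendsto f atTop (𝓝 L)) (R : E →L[ℂ] F) :
    Tendsto (fun t => f t ∘L R) atTop (𝓝 (L ∘L R)) :=
  (((ContinuousLinearMap.compL ℂ E F G).flip R).continuous.tendsto L).comp h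

lemma tendsto_comp_left_of {E F G : Type*} [NormedAddCommGroup E] [NormedSpace ℂ E]
    [NormedAddCommGroup F] [NormedSpace ℂ F] [NormedAddCommGroup G] [NormedSpace ℂ G]
    {f : ℕ → E →L[ℂ] F} {L : E →L[ℂ] F} (h : Tendsto f atTop (𝓝 L)) (Lc : F →L[ℂ] G) :
    Tendsto (fun t => Lc ∘L f t) atTop (𝓝 (Lc ∘L L)) :=
  ((ContinuousLinearMap.compL ℂ E F G Lc).continuous.tendsto L).comp h

end glue

/-- If `A ⊆ B(H)` is an approximately unital operator algebra, `M ⊆ B(H,K)` a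
σ-TRO with `M* M A ⊆ A` and `clspan (M* M A) = clspan (A M* M)`, then for
`Y = clspan (M A)`, `B = clspan (M A M*)`, `M₁ = M*`, `M₂ = clspan (M M*)`, the spaces `M₁`,
`M₂` are σ-TROs and `B = clspan (M₂* Y M₁)`, `Y = clspan (M₂ B M₁*)`; i.e. `Y ∼_{σTRO} B`. -/
theorem stmt_3 {H K : Type*} [NormedAddCommGroup H] [InnerProductSpace ℂ H] [CompleteSpace H]
    [NormedAddCommGroup K] [InnerProductSpace ℂ K] [CompleteSpace K]
    (A : Submodule ℂ (H →L[ℂ] H)) (M : Set (H →L[ℂ] K))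
    (hAc : IsClosed (A : Set (H →L[ℂ] H))) (hAm : ∀ x ∈ A, ∀ y ∈ A, x ∘L y ∈ A)
    {ι : Type*} [Preorder ι] [IsDirected ι (· ≤ ·)] [Nonempty ι]
    (e : ι → (H →L[ℂ] H)) (he : ∀ i, e i ∈ A) (hen : ∀ i, ‖e i‖ ≤ 1)
    (heL : ∀ x ∈ A, Tendsto (fun i => e i ∘L x) atTop (𝓝 x))
    (heR : ∀ x ∈ A, Tendsto (fun i => x ∘L e i) atTop (𝓝 x))
    (hM : IsSigmaTRO M)
    (hMMA : ∀ x ∈ M, ∀ y ∈ M, ∀ a ∈ A, adjoint x ∘L (y ∘L a) ∈ A)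
    (hdouble : clspan {x : H →L[ℂ] H | ∃ m ∈ M, ∃ n ∈ M, ∃ a ∈ A, x = adjoint m ∘L (n ∘L a)}
      = clspan {x : H →L[ℂ] H | ∃ a ∈ A, ∃ m ∈ M, ∃ n ∈ M, x = a ∘L (adjoint m ∘L n)})
    (Y : Set (H →L[ℂ] K)) (B : Set (K →L[ℂ] K))
    (M₁ : Set (K →L[ℂ] H)) (M₂ : Set (K →L[ℂ] K))
    (hY : Y = clspan {x : H →L[ℂ] K | ∃ m ∈ M, ∃ a ∈ A, x = m ∘L a})
    (hB : B = clspan {x : K →L[ℂ] K | ∃ m ∈ M, ∃ a ∈ A, ∃ n ∈ M, x = m ∘L a ∘L adjoint n})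
    (hM₁ : M₁ = {x : K →L[ℂ] H | ∃ m ∈ M, x = adjoint m})
    (hM₂ : M₂ = clspan {x : K →L[ℂ] K | ∃ m ∈ M, ∃ n ∈ M, x = m ∘L adjoint n}) :
    IsSigmaTRO M₁ ∧ IsSigmaTRO M₂ ∧
    B = clspan {x : K →L[ℂ] K | ∃ m₂ ∈ M₂, ∃ y ∈ Y, ∃ m₁ ∈ M₁, x = adjoint m₂ ∘L (y ∘L m₁)} ∧
    Y = clspan {x : H →L[ℂ] K | ∃ m₂ ∈ M₂, ∃ b ∈ B, ∃ m₁ ∈ M₁, x = m₂ ∘L (b ∘L adjoint m₁)} := by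
  obtain ⟨ml, hml, hmlnorm, hmlconv⟩ := hM.left_seq
  obtain ⟨nr, hnr, hnrnorm, hnrconv⟩ := hM.right_seq
  subst hY hB hM₁ hM₂
  set SY : Set (H →L[ℂ] K) := {x | ∃ m ∈ M, ∃ a ∈ A, x = m ∘L a} with hSY
  set SB : Set (K →L[ℂ] K) := {x | ∃ m ∈ M, ∃ a ∈ A, ∃ n ∈ M, x = m ∘L a ∘L adjoint n} with hSB
  set T : Set (K →L[ℂ] K) := {x | ∃ m ∈ M, ∃ n ∈ M, x = m ∘L adjoint n} with hTdef
  set Lg : Set (H →L[ℂ] H) := {x | ∃ m ∈ M, ∃ n ∈ M, ∃ a ∈ A, x = adjoint m ∘L (n ∘L a)}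
    with hLg
  set Rg : Set (H →L[ℂ] H) := {x | ∃ a ∈ A, ∃ m ∈ M, ∃ n ∈ M, x = a ∘L (adjoint m ∘L n)}
    with hRg
  have hdouble' : ((clspanSub Lg : Submodule ℂ (H →L[ℂ] H)) : Set (H →L[ℂ] H))
      = ((clspanSub Rg : Submodule ℂ (H →L[ℂ] H)) : Set (H →L[ℂ] H)) := by
    rw [← clspan_eq, ← clspan_eq]; exact hdouble
  have hLgA : Lg ⊆ (A : Set (H →L[ℂ] H)) := by
    rintro x ⟨m, hm, n, hn, a, ha, rfl⟩
    exact hMMA m hm n hn a ha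
  -- the TRO product facts
  have htro : ∀ x ∈ M, ∀ y ∈ M, ∀ z ∈ M, x ∘L (adjoint y ∘L z) ∈ M := hM.tro
  -- Part 1 and 2
  refine ⟨sigmaTRO_adjoint hM, by rw [clspan_eq]; exact sigmaTRO_M2 hM, ?_, ?_⟩
  · -- B = clspan S₃
    set S₃ : Set (K →L[ℂ] K) := {x | ∃ m₂ ∈ clspan T, ∃ y ∈ clspan SY,
      ∃ m₁ ∈ {x : K →L[ℂ] H | ∃ m ∈ M, x = adjoint m}, x = adjoint m₂ ∘L (y ∘L m₁)} with hS₃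
    rw [clspan_eq, clspan_eq]
    apply Set.Subset.antisymm
    · -- B ⊆ clspan S₃
      apply clspanSub_min (clspanSub_isClosed S₃)
      rintro x ⟨m, hm, a, ha, n, hn, rfl⟩
      have hterm : ∀ t : ℕ, ∑ i ∈ Finset.range t,
          (ml i ∘L adjoint (ml i)) ∘L (m ∘L (a ∘L adjoint n)) ∈ clspanSub S₃ := by
        intro t
        apply Submodule.sum_mem
        intro i _
        apply subset_clspanSub
        refine ⟨ml i ∘L adjoint (ml i), ?_, m ∘L a, ?_, adjoint n, ⟨n, hn, rfl⟩, ?_⟩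
        · rw [clspan_eq]
          exact subset_clspanSub T ⟨ml i, hml i, ml i, hml i, rfl⟩
        · rw [clspan_eq]
          exact subset_clspanSub SY ⟨m, hm, a, ha, rfl⟩
        · rw [adjoint_comp_adjoint_self]
          simp [comp_assoc]
      refine mem_of_tendsto_sub (clspanSub_isClosed S₃) hterm ?_
      have h1 : Tendsto (fun t => (∑ i ∈ Finset.range t, (ml i ∘L adjoint (ml i)) ∘L m)
          ∘L (a ∘L adjoint n)) atTop (𝓝 (m ∘L (a ∘L adjoint n))) :=
        tendsto_comp_right_of (hmlconv m hm) (a ∘L adjoint n)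
      have key : ∀ t, (∑ i ∈ Finset.range t, (ml i ∘L adjoint (ml i)) ∘L m)
          ∘L (a ∘L adjoint n)
          = ∑ i ∈ Finset.range t, (ml i ∘L adjoint (ml i)) ∘L (m ∘L (a ∘L adjoint n)) := by
        intro t
        rw [sum_comp']
        exact Finset.sum_congr rfl fun i _ => by simp [comp_assoc]
      simp only [key] at h1
      exact h1
    · -- clspan S₃ ⊆ B
      apply clspanSub_min (clspanSub_isClosed SB)
      rintro x ⟨m₂, hm₂, y, hy, m₁, ⟨m'', hm'', rfl⟩, rfl⟩
      rw [clspan_eq] at hm₂ hy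
      have inner : ∀ t ∈ T, ∀ sy ∈ SY, adjoint t ∘L (sy ∘L adjoint m'') ∈ clspanSub SB := by
        rintro t ⟨m, hm, n, hn, rfl⟩ sy ⟨m', hm', a, ha, rfl⟩
        apply subset_clspanSub
        refine ⟨n, hn, adjoint m ∘L (m' ∘L a), hMMA m hm m' hm' a ha, m'', hm'', ?_⟩
        rw [adjoint_comp, adjoint_adjoint]
        simp [comp_assoc]
      have mid : ∀ t ∈ T, ∀ y' ∈ ((clspanSub SY : Submodule ℂ (H →L[ℂ] K)) : Set (H →L[ℂ] K)),
          adjoint t ∘L (y' ∘L adjoint m'') ∈ clspanSub SB := by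
        intro t ht
        exact mem_of_clspan (fun y' => adjoint t ∘L (y' ∘L adjoint m''))
          (fun p q => by simp) (fun c p => ⟨c, by simp⟩)
          (continuous_const.clm_comp (continuous_id.clm_comp continuous_const))
          SY (clspanSub SB) (clspanSub_isClosed SB) (fun s hs => inner t ht s hs)
      exact mem_of_clspan (fun w => adjoint w ∘L (y ∘L adjoint m''))
        (fun p q => by simp [map_add])
        (fun c p => ⟨starRingEnd ℂ c, by simp only [adjoint_smul', smul_comp]⟩)
        (((ContinuousLinearMap.adjoint (𝕜 := ℂ) (E := K) (F := K)).continuous).clm_comp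
          continuous_const)
        T (clspanSub SB) (clspanSub_isClosed SB) (fun s hs => mid s hs y hy) m₂ hm₂
  · -- Y = clspan S₄
    set S₄ : Set (H →L[ℂ] K) := {x | ∃ m₂ ∈ clspan T, ∃ b ∈ clspan SB,
      ∃ m₁ ∈ {x : K →L[ℂ] H | ∃ m ∈ M, x = adjoint m}, x = m₂ ∘L (b ∘L adjoint m₁)} with hS₄
    rw [clspan_eq, clspan_eq]
    apply Set.Subset.antisymm
    · -- Y ⊆ clspan S₄
      -- Step A : SB ∘ M ⊆ clspanSub S₄
      have stepA : ∀ sb ∈ SB, ∀ m''' ∈ M, sb ∘L m''' ∈ clspanSub S₄ := by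
        rintro sb ⟨m', hm', a', ha', n', hn', rfl⟩ m''' hm'''
        have hterm : ∀ t : ℕ, ∑ i ∈ Finset.range t,
            (ml i ∘L adjoint (ml i)) ∘L ((m' ∘L (a' ∘L adjoint n')) ∘L m''') ∈
            clspanSub S₄ := by
          intro t
          apply Submodule.sum_mem
          intro i _
          apply subset_clspanSub
          refine ⟨ml i ∘L adjoint (ml i), ?_, m' ∘L (a' ∘L adjoint n'), ?_,
            adjoint m''', ⟨m''', hm''', rfl⟩, ?_⟩
          · rw [clspan_eq]
            exact subset_clspanSub T ⟨ml i, hml i, ml i, hml i, rfl⟩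
          · rw [clspan_eq]
            exact subset_clspanSub SB ⟨m', hm', a', ha', n', hn', rfl⟩
          · rw [adjoint_adjoint]
        refine mem_of_tendsto_sub (clspanSub_isClosed S₄) hterm ?_
        have h1 : Tendsto (fun t => (∑ i ∈ Finset.range t, (ml i ∘L adjoint (ml i)) ∘L m')
            ∘L (a' ∘L (adjoint n' ∘L m'''))) atTop
            (𝓝 (m' ∘L (a' ∘L (adjoint n' ∘L m''')))) :=
          tendsto_comp_right_of (hmlconv m' hm') _
        have key : ∀ t, (∑ i ∈ Finset.range t, (ml i ∘L adjoint (ml i)) ∘L m')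
            ∘L (a' ∘L (adjoint n' ∘L m'''))
            = ∑ i ∈ Finset.range t,
              (ml i ∘L adjoint (ml i)) ∘L ((m' ∘L (a' ∘L adjoint n')) ∘L m''') := by
          intro t
          rw [sum_comp']
          exact Finset.sum_congr rfl fun i _ => by simp [comp_assoc]
        simp only [key] at h1
        have hpt : m' ∘L (a' ∘L (adjoint n' ∘L m''')) = (m' ∘L (a' ∘L adjoint n')) ∘L m''' := by
          simp [comp_assoc]
        rw [hpt] at h1
        exact h1
      -- Step B : M ∘ clspanSub Rg ⊆ clspanSub S₄
      have stepB : ∀ mt ∈ M, ∀ c ∈ ((clspanSub Rg : Submodule ℂ (H →L[ℂ] H)) :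
          Set (H →L[ℂ] H)), mt ∘L c ∈ clspanSub S₄ := by
        intro mt hmt
        refine mem_of_clspan (fun c => mt ∘L c) (fun p q => by simp) (fun c p => ⟨c, by simp⟩)
          (continuous_const.clm_comp continuous_id) Rg (clspanSub S₄) (clspanSub_isClosed S₄) ?_
        rintro s ⟨a, ha, m', hm', n', hn', rfl⟩
        show mt ∘L (a ∘L (adjoint m' ∘L n')) ∈ clspanSub S₄
        have h2 : mt ∘L (a ∘L (adjoint m' ∘L n')) = (mt ∘L (a ∘L adjoint m')) ∘L n' := by
          simp [comp_assoc]
        rw [h2]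
        exact stepA (mt ∘L (a ∘L adjoint m')) ⟨mt, hmt, a, ha, m', hm', rfl⟩ n' hn'
      -- Step C : SY ⊆ clspanSub S₄
      apply clspanSub_min (clspanSub_isClosed S₄)
      rintro x ⟨m, hm, a, ha, rfl⟩
      have hterm : ∀ t : ℕ, ∑ j ∈ Finset.range t,
          (m ∘L (adjoint (nr j) ∘L nr j)) ∘L a ∈ clspanSub S₄ := by
        intro t
        apply Submodule.sum_mem
        intro j _
        have h3 : (m ∘L (adjoint (nr j) ∘L nr j)) ∘L a
            = m ∘L (adjoint (nr j) ∘L (nr j ∘L a)) := by simp [comp_assoc]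
        rw [h3]
        apply stepB m hm
        rw [← hdouble']
        exact subset_clspanSub Lg ⟨nr j, hnr j, nr j, hnr j, a, ha, rfl⟩
      refine mem_of_tendsto_sub (clspanSub_isClosed S₄) hterm ?_
      have h1 : Tendsto (fun t => (∑ j ∈ Finset.range t, m ∘L (adjoint (nr j) ∘L nr j)) ∘L a)
          atTop (𝓝 (m ∘L a)) := tendsto_comp_right_of (hnrconv m hm) a
      have key : ∀ t, (∑ j ∈ Finset.range t, m ∘L (adjoint (nr j) ∘L nr j)) ∘L a
          = ∑ j ∈ Finset.range t, (m ∘L (adjoint (nr j) ∘L nr j)) ∘L a := by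
        intro t
        rw [sum_comp']
      simp only [key] at h1
      exact h1
    · -- clspan S₄ ⊆ Y
      apply clspanSub_min (clspanSub_isClosed SY)
      rintro x ⟨m₂, hm₂, b, hb, m₁, ⟨m'', hm'', rfl⟩, rfl⟩
      rw [clspan_eq] at hm₂ hb
      rw [adjoint_adjoint]
      have inner : ∀ t ∈ T, ∀ sb ∈ SB, t ∘L (sb ∘L m'') ∈ clspanSub SY := by
        rintro t ⟨m, hm, n, hn, rfl⟩ sb ⟨m', hm', a, ha, n', hn', rfl⟩
        have hm₀ : m ∘L (adjoint n ∘L m') ∈ M := htro m hm n hn m' hm'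
        have hc : a ∘L (adjoint n' ∘L m'') ∈ Rg := ⟨a, ha, n', hn', m'', hm'', rfl⟩
        have hkey : (m ∘L adjoint n) ∘L ((m' ∘L (a ∘L adjoint n')) ∘L m'')
            = (m ∘L (adjoint n ∘L m')) ∘L (a ∘L (adjoint n' ∘L m'')) := by
          simp [comp_assoc]
        rw [hkey]
        -- now use hdouble to move into Lg-span, then multiply by the M element
        refine mem_of_clspan (fun c => (m ∘L (adjoint n ∘L m')) ∘L c)
          (fun p q => by simp) (fun c p => ⟨c, by simp⟩)
          (continuous_const.clm_comp continuous_id) Lg (clspanSub SY)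
          (clspanSub_isClosed SY) ?_ _ ?_
        · rintro s ⟨mh, hmh, nh, hnh, ah, hah, rfl⟩
          apply subset_clspanSub
          refine ⟨(m ∘L (adjoint n ∘L m')) ∘L (adjoint mh ∘L nh),
            htro _ hm₀ mh hmh nh hnh, ah, hah, ?_⟩
          simp [comp_assoc]
        · rw [hdouble']
          exact subset_clspanSub Rg hc
      have mid : ∀ t ∈ T, ∀ b' ∈ ((clspanSub SB : Submodule ℂ (K →L[ℂ] K)) : Set (K →L[ℂ] K)),
          t ∘L (b' ∘L m'') ∈ clspanSub SY := by
        intro t ht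
        exact mem_of_clspan (fun b' => t ∘L (b' ∘L m'')) (fun p q => by simp)
          (fun c p => ⟨c, by simp⟩)
          (continuous_const.clm_comp (continuous_id.clm_comp continuous_const))
          SB (clspanSub SY) (clspanSub_isClosed SY) (fun s hs => inner t ht s hs)
      exact mem_of_clspan (fun w => w ∘L (b ∘L m'')) (fun p q => by simp)
        (fun c p => ⟨c, by simp⟩)
        (continuous_id.clm_comp continuous_const)
        T (clspanSub SY) (clspanSub_isClosed SY) (fun s hs => mid s hs b hb) m₂ hm₂
end

section
/- Let A ⊆ B(H) be an operator algebra with contractive approximate identity and M ⊆ B(H,K) a σ-TRO with M* M A ⊆ A. Let Y = closed span of M A and define the restriction Z = closed span of Y M* M = closed span of M A M* M, and A₀ = closed span of M* M A M* M. Then Z equals the closed span of M A₀, and the closed span of M* M A₀ equals A₀ equals the closed span of A₀ M* M; thus Z is a doubly σ-TRO-A₀-rigged module. -/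
/-!
Every element `m` of a σ-TRO `M` is a norm limit of sums `∑ mᵢ mᵢ* m` and of sums `∑ m nⱼ* nⱼ`
with `mᵢ, nⱼ ∈ M`, so a factor from `M` can be expanded to `M M* M` on either side without
leaving the closed span, while `M M* M ⊆ M` contracts it again. Expanding and contracting
shows that every generator of each side of the four equalities lies in the closed span of
the other side.
-/

open Filter Topology ContinuousLinearMap

section clspan

variable {H K H₂ K₂ : Type*} [NormedAddCommGroup H] [InnerProductSpace ℂ H]
  [NormedAddCommGroup K] [InnerProductSpace ℂ K]
  [NormedAddCommGroup H₂] [InnerProductSpace ℂ H₂]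
  [NormedAddCommGroup K₂] [InnerProductSpace ℂ K₂]
  {S : Set (H →L[ℂ] K)} {x : H →L[ℂ] K}

lemma subset_clspan (S : Set (H →L[ℂ] K)) : S ⊆ clspan S :=
  Submodule.subset_span.trans subset_closure

lemma clspan_eq_topologicalClosure (S : Set (H →L[ℂ] K)) :
    clspan S = ((Submodule.span ℂ S).topologicalClosure : Set (H →L[ℂ] K)) :=
  (Submodule.topologicalClosure_coe _).symm

lemma clspan_subset_clspan_iff {T : Set (H →L[ℂ] K)} : clspan S ⊆ clspan T ↔ S ⊆ clspan T := by
  refine ⟨(subset_clspan S).trans, fun h => closure_minimal ?_ isClosed_closure⟩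
  rw [clspan_eq_topologicalClosure] at h ⊢
  exact Submodule.span_le.mpr h

lemma mapsTo_clspan {T : Set (H₂ →L[ℂ] K₂)} (f : (H →L[ℂ] K) →L[ℂ] (H₂ →L[ℂ] K₂))
    (h : Set.MapsTo f S (clspan T)) : Set.MapsTo f (clspan S) (clspan T) := by
  rw [clspan_eq_topologicalClosure T] at h ⊢
  have hspan : Submodule.span ℂ S ≤
      (Submodule.span ℂ T).topologicalClosure.comap (f : (H →L[ℂ] K) →ₗ[ℂ] (H₂ →L[ℂ] K₂)) :=
    Submodule.span_le.mpr h
  exact closure_minimal hspan ((Submodule.isClosed_topologicalClosure _).preimage f.continuous)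

lemma comp_mem_clspan {T : Set (H →L[ℂ] K₂)} (b : K →L[ℂ] K₂)
    (h : ∀ s ∈ S, b ∘L s ∈ clspan T) (hx : x ∈ clspan S) : b ∘L x ∈ clspan T :=
  mapsTo_clspan (compL ℂ H K K₂ b) h hx

lemma mem_clspan_comp {T : Set (H₂ →L[ℂ] K)} (b : H₂ →L[ℂ] H)
    (h : ∀ s ∈ S, s ∘L b ∈ clspan T) (hx : x ∈ clspan S) : x ∘L b ∈ clspan T :=
  mapsTo_clspan ((compL ℂ H₂ H K).flip b) h hx

lemma mem_clspan_of_tendsto_sum {f : ℕ → H →L[ℂ] K} (hf : ∀ i, f i ∈ S)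
    (hx : Tendsto (fun n => ∑ i ∈ Finset.range n, f i) atTop (𝓝 x)) : x ∈ clspan S :=
  mem_closure_of_tendsto hx <| Eventually.of_forall fun _ =>
    Submodule.sum_mem _ fun i _ => Submodule.subset_span (hf i)

end clspan

section corner

variable {H K : Type*} [NormedAddCommGroup H] [InnerProductSpace ℂ H] [CompleteSpace H]
  [NormedAddCommGroup K] [InnerProductSpace ℂ K] [CompleteSpace K]
  {M : Set (H →L[ℂ] K)} {A : Set (H →L[ℂ] H)}

/-- The algebra `A₀ = [M* M A M* M]`. -/
noncomputable def cornerAlg (M : Set (H →L[ℂ] K)) (A : Set (H →L[ℂ] H)) : Set (H →L[ℂ] H) :=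
  clspan {x | ∃ m ∈ M, ∃ n ∈ M, ∃ a ∈ A, ∃ p ∈ M, ∃ q ∈ M,
    x = adjoint m ∘L (n ∘L (a ∘L (adjoint p ∘L q)))}

lemma adjoint_comp_mem_cornerAlg {m n p q : H →L[ℂ] K} {a : H →L[ℂ] H}
    (hm : m ∈ M) (hn : n ∈ M) (ha : a ∈ A) (hp : p ∈ M) (hq : q ∈ M) :
    adjoint m ∘L (n ∘L (a ∘L (adjoint p ∘L q))) ∈ cornerAlg M A :=
  subset_clspan _ ⟨m, hm, n, hn, a, ha, p, hp, q, hq, rfl⟩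

lemma clspan_restriction_eq {Y : Set (H →L[ℂ] K)}
    (hY : Y = clspan {x | ∃ m ∈ M, ∃ a ∈ A, x = m ∘L a}) :
    clspan {x | ∃ y ∈ Y, ∃ m ∈ M, ∃ n ∈ M, x = y ∘L (adjoint m ∘L n)} =
      clspan {x | ∃ m ∈ M, ∃ a ∈ A, ∃ p ∈ M, ∃ q ∈ M, x = m ∘L (a ∘L (adjoint p ∘L q))} := by
  subst hY
  apply subset_antisymm <;> rw [clspan_subset_clspan_iff]
  · rintro _ ⟨y, hy, p, hp, q, hq, rfl⟩
    refine mem_clspan_comp _ ?_ hy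
    rintro _ ⟨m, hm, a, ha, rfl⟩
    exact subset_clspan _ ⟨m, hm, a, ha, p, hp, q, hq, rfl⟩
  · rintro _ ⟨m, hm, a, ha, p, hp, q, hq, rfl⟩
    exact subset_clspan _ ⟨m ∘L a, subset_clspan _ ⟨m, hm, a, ha, rfl⟩, p, hp, q, hq, rfl⟩

namespace IsSigmaTRO

lemma mem_clspan_comp_adjoint_comp (hM : IsSigmaTRO M) {m : H →L[ℂ] K} (hm : m ∈ M) :
    m ∈ clspan {x | ∃ n ∈ M, x = n ∘L (adjoint n ∘L m)} := by
  obtain ⟨u, huM, -, hu⟩ := hM.left_seq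
  exact mem_clspan_of_tendsto_sum (fun i => ⟨u i, huM i, rfl⟩) (hu m hm)

lemma mem_clspan_adjoint_comp (hM : IsSigmaTRO M) {m : H →L[ℂ] K} (hm : m ∈ M) :
    m ∈ clspan {x | ∃ n ∈ M, x = m ∘L (adjoint n ∘L n)} := by
  obtain ⟨u, huM, -, hu⟩ := hM.right_seq
  exact mem_clspan_of_tendsto_sum (fun i => ⟨u i, huM i, rfl⟩) (hu m hm)

lemma comp_mem_clspan_comp_cornerAlg (hM : IsSigmaTRO M) {m p q : H →L[ℂ] K}
    {a : H →L[ℂ] H} (hm : m ∈ M) (ha : a ∈ A) (hp : p ∈ M) (hq : q ∈ M) :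
    m ∘L (a ∘L (adjoint p ∘L q)) ∈ clspan {x | ∃ n ∈ M, ∃ b ∈ cornerAlg M A, x = n ∘L b} := by
  refine mem_clspan_comp _ ?_ (hM.mem_clspan_comp_adjoint_comp hm)
  rintro _ ⟨n, hn, rfl⟩
  exact subset_clspan _ ⟨n, hn, _, adjoint_comp_mem_cornerAlg hn hm ha hp hq, rfl⟩

lemma clspan_comp_eq_clspan_comp_cornerAlg (hM : IsSigmaTRO M) :
    clspan {x | ∃ m ∈ M, ∃ a ∈ A, ∃ p ∈ M, ∃ q ∈ M, x = m ∘L (a ∘L (adjoint p ∘L q))} =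
      clspan {x | ∃ m ∈ M, ∃ b ∈ cornerAlg M A, x = m ∘L b} := by
  apply subset_antisymm <;> rw [clspan_subset_clspan_iff]
  · rintro _ ⟨m, hm, a, ha, p, hp, q, hq, rfl⟩
    exact hM.comp_mem_clspan_comp_cornerAlg hm ha hp hq
  · rintro _ ⟨m, hm, b, hb, rfl⟩
    refine comp_mem_clspan m ?_ hb
    rintro _ ⟨k, hk, n, hn, a, ha, p, hp, q, hq, rfl⟩
    exact subset_clspan _ ⟨m ∘L (adjoint k ∘L n), hM.tro m hm k hk n hn, a, ha, p, hp, q, hq, rfl⟩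

lemma clspan_adjoint_comp_cornerAlg_eq (hM : IsSigmaTRO M) :
    clspan {x | ∃ m ∈ M, ∃ n ∈ M, ∃ b ∈ cornerAlg M A, x = adjoint m ∘L (n ∘L b)} =
      cornerAlg M A := by
  apply subset_antisymm
  · refine clspan_subset_clspan_iff.mpr ?_
    rintro _ ⟨m, hm, n, hn, b, hb, rfl⟩
    refine comp_mem_clspan (adjoint m ∘L n) ?_ hb
    rintro _ ⟨k, hk, l, hl, a, ha, p, hp, q, hq, rfl⟩
    exact subset_clspan _
      ⟨m, hm, n ∘L (adjoint k ∘L l), hM.tro n hn k hk l hl, a, ha, p, hp, q, hq, rfl⟩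
  · refine clspan_subset_clspan_iff.mpr ?_
    rintro _ ⟨m, hm, n, hn, a, ha, p, hp, q, hq, rfl⟩
    refine comp_mem_clspan (adjoint m) ?_ (hM.comp_mem_clspan_comp_cornerAlg hn ha hp hq)
    rintro _ ⟨k, hk, b, hb, rfl⟩
    exact subset_clspan _ ⟨m, hm, k, hk, b, hb, rfl⟩

lemma cornerAlg_eq_clspan_comp_adjoint_comp (hM : IsSigmaTRO M) :
    cornerAlg M A =
      clspan {x | ∃ b ∈ cornerAlg M A, ∃ m ∈ M, ∃ n ∈ M, x = b ∘L (adjoint m ∘L n)} := by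
  apply subset_antisymm
  · refine clspan_subset_clspan_iff.mpr ?_
    rintro _ ⟨m, hm, n, hn, a, ha, p, hp, q, hq, rfl⟩
    refine comp_mem_clspan (adjoint m ∘L (n ∘L (a ∘L adjoint p))) ?_
      (hM.mem_clspan_adjoint_comp hq)
    rintro _ ⟨k, hk, rfl⟩
    exact subset_clspan _ ⟨_, adjoint_comp_mem_cornerAlg hm hn ha hp hq, k, hk, k, hk, rfl⟩
  · refine clspan_subset_clspan_iff.mpr ?_
    rintro _ ⟨b, hb, m, hm, n, hn, rfl⟩
    refine mem_clspan_comp (adjoint m ∘L n) ?_ hb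
    rintro _ ⟨k, hk, l, hl, a, ha, p, hp, q, hq, rfl⟩
    exact subset_clspan _
      ⟨k, hk, l, hl, a, ha, p, hp, q ∘L (adjoint m ∘L n), hM.tro q hq m hm n hn, rfl⟩

end IsSigmaTRO

end corner

theorem stmt_4_general {H K : Type*} [NormedAddCommGroup H] [InnerProductSpace ℂ H] [CompleteSpace H]
    [NormedAddCommGroup K] [InnerProductSpace ℂ K] [CompleteSpace K]
    (A : Submodule ℂ (H →L[ℂ] H)) (M : Set (H →L[ℂ] K))
    (hM : IsSigmaTRO M)
    (Y Z : Set (H →L[ℂ] K)) (A₀ : Set (H →L[ℂ] H))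
    (hY : Y = clspan {x : H →L[ℂ] K | ∃ m ∈ M, ∃ a ∈ A, x = m ∘L a})
    (hZ : Z = clspan {x : H →L[ℂ] K | ∃ y ∈ Y, ∃ m ∈ M, ∃ n ∈ M, x = y ∘L (adjoint m ∘L n)})
    (hA₀ : A₀ = clspan {x : H →L[ℂ] H |
      ∃ m ∈ M, ∃ n ∈ M, ∃ a ∈ A, ∃ p ∈ M, ∃ q ∈ M,
        x = adjoint m ∘L (n ∘L (a ∘L (adjoint p ∘L q)))}) :
    Z = clspan {x : H →L[ℂ] K | ∃ m ∈ M, ∃ a ∈ A, ∃ p ∈ M, ∃ q ∈ M,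
        x = m ∘L (a ∘L (adjoint p ∘L q))} ∧
    Z = clspan {x : H →L[ℂ] K | ∃ m ∈ M, ∃ a ∈ A₀, x = m ∘L a} ∧
    clspan {x : H →L[ℂ] H | ∃ m ∈ M, ∃ n ∈ M, ∃ a ∈ A₀, x = adjoint m ∘L (n ∘L a)} = A₀ ∧
    A₀ = clspan {x : H →L[ℂ] H | ∃ a ∈ A₀, ∃ m ∈ M, ∃ n ∈ M, x = a ∘L (adjoint m ∘L n)} := by
  have hZ' := hZ.trans (clspan_restriction_eq hY)
  replace hA₀ : A₀ = cornerAlg M A := hA₀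
  subst hA₀
  exact ⟨hZ', hZ'.trans hM.clspan_comp_eq_clspan_comp_cornerAlg,
    hM.clspan_adjoint_comp_cornerAlg_eq, hM.cornerAlg_eq_clspan_comp_adjoint_comp⟩

/-- With `A` an approximately unital operator algebra, `M` a σ-TRO such that
`M* M A ⊆ A`, `Y = clspan (M A)`, `Z = clspan (Y M* M)` the restriction of `Y`, and
`A₀ = clspan (M* M A M* M)`, one has `Z = clspan (M A M* M) = clspan (M A₀)` and
`clspan (M* M A₀) = A₀ = clspan (A₀ M* M)`; i.e. `Z` is a doubly σ-TRO-`A₀`-rigged module. -/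
theorem stmt_4 {H K : Type*} [NormedAddCommGroup H] [InnerProductSpace ℂ H] [CompleteSpace H]
    [NormedAddCommGroup K] [InnerProductSpace ℂ K] [CompleteSpace K]
    (A : Submodule ℂ (H →L[ℂ] H)) (M : Set (H →L[ℂ] K))
    (hAc : IsClosed (A : Set (H →L[ℂ] H))) (hAm : ∀ x ∈ A, ∀ y ∈ A, x ∘L y ∈ A)
    {ι : Type*} [Preorder ι] [IsDirected ι (· ≤ ·)] [Nonempty ι]
    (e : ι → (H →L[ℂ] H)) (he : ∀ i, e i ∈ A) (hen : ∀ i, ‖e i‖ ≤ 1)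
    (heL : ∀ x ∈ A, Tendsto (fun i => e i ∘L x) atTop (𝓝 x))
    (heR : ∀ x ∈ A, Tendsto (fun i => x ∘L e i) atTop (𝓝 x))
    (hM : IsSigmaTRO M)
    (hMMA : ∀ x ∈ M, ∀ y ∈ M, ∀ a ∈ A, adjoint x ∘L (y ∘L a) ∈ A)
    (Y Z : Set (H →L[ℂ] K)) (A₀ : Set (H →L[ℂ] H))
    (hY : Y = clspan {x : H →L[ℂ] K | ∃ m ∈ M, ∃ a ∈ A, x = m ∘L a})
    (hZ : Z = clspan {x : H →L[ℂ] K | ∃ y ∈ Y, ∃ m ∈ M, ∃ n ∈ M, x = y ∘L (adjoint m ∘L n)})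
    (hA₀ : A₀ = clspan {x : H →L[ℂ] H |
      ∃ m ∈ M, ∃ n ∈ M, ∃ a ∈ A, ∃ p ∈ M, ∃ q ∈ M,
        x = adjoint m ∘L (n ∘L (a ∘L (adjoint p ∘L q)))}) :
    Z = clspan {x : H →L[ℂ] K | ∃ m ∈ M, ∃ a ∈ A, ∃ p ∈ M, ∃ q ∈ M,
        x = m ∘L (a ∘L (adjoint p ∘L q))} ∧
    Z = clspan {x : H →L[ℂ] K | ∃ m ∈ M, ∃ a ∈ A₀, x = m ∘L a} ∧
    clspan {x : H →L[ℂ] H | ∃ m ∈ M, ∃ n ∈ M, ∃ a ∈ A₀, x = adjoint m ∘L (n ∘L a)} = A₀ ∧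
    A₀ = clspan {x : H →L[ℂ] H | ∃ a ∈ A₀, ∃ m ∈ M, ∃ n ∈ M, x = a ∘L (adjoint m ∘L n)} :=
  stmt_4_general A M hM Y Z A₀ hY hZ hA₀
end

section
/- Let A ⊆ B(H) be an operator algebra with contractive approximate identity and M ⊆ B(H,K) a σ-TRO with M* M A ⊆ A. Let Y = closed span of M A, and let (m_i) be a sequence in M with partial sums ∑_{i≤n} m_i m_i* of norm at most 1 and ∑_i m_i m_i* m = m for all m ∈ M. Then for every y ∈ Y, the series ∑_i m_i m_i* y converges in norm to y. -/
open Filter Topology ContinuousLinearMap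

/-!
The partial sums `Sₙ = ∑_{i<n} mᵢ mᵢ*` are contractions, so left multiplication by them is an
equicontinuous family on `B(H,K)`. The set of operators `y` with `Sₙ y → y` is therefore a closed
subspace; it contains every product `m a` with `m ∈ M` (since `Sₙ m → m`), hence all of `Y`.
-/

namespace ContinuousLinearMap

variable {𝕜 E F ι : Type*} [NontriviallyNormedField 𝕜]
  [SeminormedAddCommGroup E] [NormedSpace 𝕜 E] [SeminormedAddCommGroup F] [NormedSpace 𝕜 F]

def tendstoSubmodule (f : ι → E →L[𝕜] F) (l : Filter ι) (g : E →L[𝕜] F) : Submodule 𝕜 E where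
  carrier := {x | Tendsto (f · x) l (𝓝 (g x))}
  add_mem' {x y} (hx : Tendsto _ _ _) (hy : Tendsto _ _ _) := by
    simpa only [Set.mem_ofPred_eq, map_add] using hx.add hy
  zero_mem' := by simpa only [Set.mem_ofPred_eq, map_zero] using tendsto_const_nhds
  smul_mem' c x (hx : Tendsto _ _ _) := by
    simpa only [Set.mem_ofPred_eq, map_smul] using hx.const_smul c

theorem isClosed_tendstoSubmodule {f : ι → E →L[𝕜] F} {C : ℝ} (hf : ∀ i, ‖f i‖ ≤ C)
    (l : Filter ι) (g : E →L[𝕜] F) : IsClosed (tendstoSubmodule f l g : Set E) := by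
  have hequi : Equicontinuous ((↑) ∘ f) :=
    ((NormedSpace.equicontinuous_TFAE f).out 5 1).mp (show ∃ C, ∀ i, ‖f i‖ ≤ C from ⟨C, hf⟩)
  exact hequi.isClosed_setOfPred_tendsto g.continuous

theorem tendsto_of_mem_closure_span {f : ι → E →L[𝕜] F} {C : ℝ} (hf : ∀ i, ‖f i‖ ≤ C)
    {l : Filter ι} {g : E →L[𝕜] F} {D : Set E} (hD : ∀ x ∈ D, Tendsto (f · x) l (𝓝 (g x)))
    {x : E} (hx : x ∈ closure (Submodule.span 𝕜 D : Set E)) : Tendsto (f · x) l (𝓝 (g x)) :=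
  closure_minimal (Submodule.span_le.mpr fun x hx => hD x hx)
    (isClosed_tendstoSubmodule hf l g) hx

end ContinuousLinearMap

theorem tendsto_comp_of_mem_clspan {H K ι : Type*} [NormedAddCommGroup H] [InnerProductSpace ℂ H]
    [NormedAddCommGroup K] [InnerProductSpace ℂ K] {S : ι → K →L[ℂ] K} {C : ℝ}
    (hS : ∀ i, ‖S i‖ ≤ C) {l : Filter ι} {T : Set (H →L[ℂ] K)}
    (hT : ∀ x ∈ T, Tendsto (fun i => S i ∘L x) l (𝓝 x)) :
    ∀ y ∈ clspan T, Tendsto (fun i => S i ∘L y) l (𝓝 y) := by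
  intro y hy
  have hbound (i : ι) : ‖compL ℂ H K K (S i)‖ ≤ C :=
    opNorm_le_bound _ ((norm_nonneg _).trans (hS i)) fun x =>
      (opNorm_comp_le (S i) x).trans (by gcongr; exact hS i)
  exact tendsto_of_mem_closure_span (f := fun i => compL ℂ H K K (S i)) (g := .id ℂ _) hbound
    hT hy

theorem Filter.Tendsto.comp_comp_right {H H' K ι : Type*} [NormedAddCommGroup H]
    [InnerProductSpace ℂ H] [NormedAddCommGroup H'] [InnerProductSpace ℂ H']
    [NormedAddCommGroup K] [InnerProductSpace ℂ K] {S : ι → K →L[ℂ] K} {l : Filter ι}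
    {x : H →L[ℂ] K} (hx : Tendsto (fun i => S i ∘L x) l (𝓝 x)) (a : H' →L[ℂ] H) :
    Tendsto (fun i => S i ∘L (x ∘L a)) l (𝓝 (x ∘L a)) := by
  simpa only [Function.comp_def, flip_apply, compL_apply, comp_assoc] using
    (((compL ℂ H' H K).flip a).continuous.tendsto x).comp hx

theorem stmt_5_general {H K : Type*} [NormedAddCommGroup H] [InnerProductSpace ℂ H] [CompleteSpace H]
    [NormedAddCommGroup K] [InnerProductSpace ℂ K] [CompleteSpace K]
    (A : Submodule ℂ (H →L[ℂ] H)) (M : Submodule ℂ (H →L[ℂ] K))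
    (m : ℕ → (H →L[ℂ] K))
    (hmn : ∀ n, ‖∑ i ∈ Finset.range n, m i ∘L adjoint (m i)‖ ≤ 1)
    (hms : ∀ x ∈ M, Tendsto (fun n => ∑ i ∈ Finset.range n, (m i ∘L adjoint (m i)) ∘L x)
      atTop (𝓝 x))
    (Y : Set (H →L[ℂ] K))
    (hY : Y = clspan {x : H →L[ℂ] K | ∃ m' ∈ M, ∃ a ∈ A, x = m' ∘L a}) :
    ∀ y ∈ Y, Tendsto (fun n => ∑ i ∈ Finset.range n, (m i ∘L adjoint (m i)) ∘L y)
      atTop (𝓝 y) := by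
  simp_rw [← finsetSum_comp] at hms ⊢
  subst hY
  refine tendsto_comp_of_mem_clspan hmn ?_
  rintro _ ⟨m', hm', a, -, rfl⟩
  exact (hms m' hm').comp_comp_right a

/-- Let `A ⊆ B(H)` be an operator algebra with contractive approximate identity,
`M ⊆ B(H,K)` a σ-TRO with `M* M A ⊆ A`, `Y = clspan (M A)`, and `(m i)` a sequence in `M`
with `‖∑_{i<n} mᵢ mᵢ*‖ ≤ 1` and `∑ᵢ mᵢ mᵢ* m = m` for every `m ∈ M`. Then for every `y ∈ Y`
the series `∑ᵢ mᵢ mᵢ* y` converges in norm to `y`. -/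
theorem stmt_5 {H K : Type*} [NormedAddCommGroup H] [InnerProductSpace ℂ H] [CompleteSpace H]
    [NormedAddCommGroup K] [InnerProductSpace ℂ K] [CompleteSpace K]
    (A : Submodule ℂ (H →L[ℂ] H)) (M : Submodule ℂ (H →L[ℂ] K))
    (hAc : IsClosed (A : Set (H →L[ℂ] H))) (hAm : ∀ x ∈ A, ∀ y ∈ A, x ∘L y ∈ A)
    {ι : Type*} [Preorder ι] [IsDirected ι (· ≤ ·)] [Nonempty ι]
    (e : ι → (H →L[ℂ] H)) (he : ∀ i, e i ∈ A) (hen : ∀ i, ‖e i‖ ≤ 1)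
    (heL : ∀ x ∈ A, Tendsto (fun i => e i ∘L x) atTop (𝓝 x))
    (heR : ∀ x ∈ A, Tendsto (fun i => x ∘L e i) atTop (𝓝 x))
    (hMc : IsClosed (M : Set (H →L[ℂ] K)))
    (hMtro : ∀ x ∈ M, ∀ y ∈ M, ∀ z ∈ M, x ∘L (adjoint y ∘L z) ∈ M)
    (hMMA : ∀ x ∈ M, ∀ y ∈ M, ∀ a ∈ A, adjoint x ∘L (y ∘L a) ∈ A)
    (m : ℕ → (H →L[ℂ] K)) (hm : ∀ i, m i ∈ M)
    (hmn : ∀ n, ‖∑ i ∈ Finset.range n, m i ∘L adjoint (m i)‖ ≤ 1)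
    (hms : ∀ x ∈ M, Tendsto (fun n => ∑ i ∈ Finset.range n, (m i ∘L adjoint (m i)) ∘L x)
      atTop (𝓝 x))
    (Y : Set (H →L[ℂ] K))
    (hY : Y = clspan {x : H →L[ℂ] K | ∃ m' ∈ M, ∃ a ∈ A, x = m' ∘L a}) :
    ∀ y ∈ Y, Tendsto (fun n => ∑ i ∈ Finset.range n, (m i ∘L adjoint (m i)) ∘L y)
      atTop (𝓝 y) :=
  stmt_5_general A M m hmn hms Y hY
end

section
/- Let A ⊆ B(H) be an operator algebra with contractive approximate identity, M ⊆ B(H,K) a σ-TRO with M* M A ⊆ A, and Y = closed span of M A. Fix (m_i) in M with ∑_i m_i m_i* m = m for all m ∈ M and ‖∑_{i≤n} m_i m_i*‖ ≤ 1 for all n. Then the map f : Y → ℓ²-column space over A given by f(y) = (m_i* y)_{i∈ℕ} is a well-defined linear isometry, i.e., ‖(m_i* y)_i‖² = ‖∑_i y* m_i m_i* y‖ = ‖y‖² for all y ∈ Y. -/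
/-!
Composition with `mᵢ*` maps each generator `m' a` of `Y` into `A` (as `M* M A ⊆ A`), hence all of
`Y` by continuity. The partial sums `∑ᵢ y* mᵢ mᵢ* y` equal `y* Pₙ y` with `Pₙ = ∑_{i<n} mᵢ mᵢ*`.
Since `Pₙ z → z` for `z ∈ M`, hence for `z ∈ M A`, and `‖Pₙ‖ ≤ 1`, the convergence `Pₙ y → y`
extends to the closed span `Y`; so the series converges to `y* y`, whose norm is `‖y‖²` by the
C*-identity.
-/

open Filter Topology ContinuousLinearMap

theorem ContinuousLinearMap.apply_mem_of_mem_closure_span {R E F : Type*} [Semiring R]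
    [TopologicalSpace E] [AddCommMonoid E] [Module R E]
    [TopologicalSpace F] [AddCommMonoid F] [Module R F]
    (f : E →L[R] F) {A : Submodule R F} (hA : IsClosed (A : Set F)) {S : Set E}
    (hS : ∀ x ∈ S, f x ∈ A) {y : E} (hy : y ∈ closure (Submodule.span R S : Set E)) :
    f y ∈ A :=
  closure_minimal (Submodule.span_le.mpr hS : Submodule.span R S ≤ A.comap (f : E →ₗ[R] F))
    (hA.preimage f.continuous) hy

theorem ContinuousLinearMap.tendsto_apply_of_mem_closure_span {𝕜 ι E F : Type*}
    [NontriviallyNormedField 𝕜] [SeminormedAddCommGroup E] [NormedSpace 𝕜 E]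
    [SeminormedAddCommGroup F] [NormedSpace 𝕜 F] {l : Filter ι} {T : ι → E →L[𝕜] F}
    {f : E →L[𝕜] F} {C : ℝ} (hT : ∀ i, ‖T i‖ ≤ C) {S : Set E}
    (hS : ∀ x ∈ S, Tendsto (T · x) l (𝓝 (f x))) {y : E}
    (hy : y ∈ closure (Submodule.span 𝕜 S : Set E)) :
    Tendsto (T · y) l (𝓝 (f y)) := by
  let V : Submodule 𝕜 E :=
    { carrier := {x | Tendsto (T · x) l (𝓝 (f x))}
      add_mem' := fun {a b} ha hb => by simpa only [Set.mem_ofPred_eq, map_add] using ha.add hb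
      zero_mem' := by simpa only [Set.mem_ofPred_eq, map_zero] using tendsto_const_nhds
      smul_mem' := fun c x hx => by
        simpa only [Set.mem_ofPred_eq, map_smul] using hx.const_smul c }
  have hbdd : ∃ C, ∀ i, ‖T i‖ ≤ C := ⟨C, hT⟩
  have hequi : Equicontinuous ((↑) ∘ T) := ((NormedSpace.equicontinuous_TFAE T).out 5 1).mp hbdd
  exact closure_minimal (Submodule.span_le.mpr hS : Submodule.span 𝕜 S ≤ V)
    (hequi.isClosed_setOfPred_tendsto f.continuous) hy

theorem ContinuousLinearMap.sum_adjoint_comp_self_eq {ι H K : Type*}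
    [NormedAddCommGroup H] [InnerProductSpace ℂ H] [CompleteSpace H]
    [NormedAddCommGroup K] [InnerProductSpace ℂ K] [CompleteSpace K]
    (m : ι → H →L[ℂ] K) (y : H →L[ℂ] K) (s : Finset ι) :
    ∑ i ∈ s, adjoint (adjoint (m i) ∘L y) ∘L (adjoint (m i) ∘L y) =
      adjoint y ∘L ((∑ i ∈ s, m i ∘L adjoint (m i)) ∘L y) := by
  simp only [finsetSum_comp, comp_finsetSum, adjoint_comp, adjoint_adjoint, comp_assoc]

theorem stmt_6_general {H K : Type*} [NormedAddCommGroup H] [InnerProductSpace ℂ H] [CompleteSpace H]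
    [NormedAddCommGroup K] [InnerProductSpace ℂ K] [CompleteSpace K]
    (A : Submodule ℂ (H →L[ℂ] H)) (M : Submodule ℂ (H →L[ℂ] K))
    (hAc : IsClosed (A : Set (H →L[ℂ] H)))
    (hMMA : ∀ x ∈ M, ∀ y ∈ M, ∀ a ∈ A, adjoint x ∘L (y ∘L a) ∈ A)
    (m : ℕ → (H →L[ℂ] K)) (hm : ∀ i, m i ∈ M)
    (hmn : ∀ n, ‖∑ i ∈ Finset.range n, m i ∘L adjoint (m i)‖ ≤ 1)
    (hms : ∀ x ∈ M, Tendsto (fun n => ∑ i ∈ Finset.range n, (m i ∘L adjoint (m i)) ∘L x)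
      atTop (𝓝 x))
    (Y : Set (H →L[ℂ] K))
    (hY : Y = clspan {x : H →L[ℂ] K | ∃ m' ∈ M, ∃ a ∈ A, x = m' ∘L a}) :
    ∀ y ∈ Y, (∀ i, adjoint (m i) ∘L y ∈ A) ∧
      ∃ S : H →L[ℂ] H,
        Tendsto (fun n => ∑ i ∈ Finset.range n,
          adjoint (adjoint (m i) ∘L y) ∘L (adjoint (m i) ∘L y)) atTop (𝓝 S) ∧
        ‖S‖ = ‖y‖ ^ 2 := by
  rintro y hy
  subst hY
  set P : ℕ → K →L[ℂ] K := fun n => ∑ i ∈ Finset.range n, m i ∘L adjoint (m i)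
  have hentries (i : ℕ) : adjoint (m i) ∘L y ∈ A :=
    (compL ℂ H K H (adjoint (m i))).apply_mem_of_mem_closure_span hAc
      (by rintro _ ⟨m', hm', a, ha, rfl⟩; exact hMMA _ (hm i) m' hm' a ha) hy
  have hPy : Tendsto (fun n => P n ∘L y) atTop (𝓝 y) := by
    have hbound (n : ℕ) : ‖compL ℂ H K K (P n)‖ ≤ 1 :=
      opNorm_le_bound _ zero_le_one fun z =>
        (opNorm_comp_le (P n) z).trans (mul_le_mul_of_nonneg_right (hmn n) (norm_nonneg z))
    have hgen : ∀ x ∈ {x : H →L[ℂ] K | ∃ m' ∈ M, ∃ a ∈ A, x = m' ∘L a},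
        Tendsto (fun n => P n ∘L x) atTop (𝓝 x) := by
      rintro _ ⟨m', hm', a, ha, rfl⟩
      have := ((compL ℂ H H K).flip a).continuous.tendsto m' |>.comp (hms m' hm')
      simpa only [P, Function.comp_def, flip_apply, compL_apply, finsetSum_comp, comp_assoc]
        using this
    exact tendsto_apply_of_mem_closure_span (T := fun n => compL ℂ H K K (P n)) (f := .id ℂ _)
      hbound hgen hy
  refine ⟨hentries, adjoint y ∘L y, ?_, by rw [norm_adjoint_comp_self, sq]⟩
  simp_rw [sum_adjoint_comp_self_eq]
  exact ((compL ℂ H K H (adjoint y)).continuous.tendsto y).comp hPy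

/-- With `A` an operator algebra with cai, `M` a σ-TRO with `M* M A ⊆ A`,
`Y = clspan (M A)` and `(m i)` a σ-TRO sequence for `M`, the map `f(y) = (mᵢ* y)ᵢ` is a
well-defined isometry into the column space over `A`: each column entry `mᵢ* y` lies in `A`,
the series `∑ᵢ (mᵢ* y)* (mᵢ* y) = ∑ᵢ y* mᵢ mᵢ* y` converges in norm, and the norm of its sum
equals `‖y‖²`. -/
theorem stmt_6 {H K : Type*} [NormedAddCommGroup H] [InnerProductSpace ℂ H] [CompleteSpace H]
    [NormedAddCommGroup K] [InnerProductSpace ℂ K] [CompleteSpace K]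
    (A : Submodule ℂ (H →L[ℂ] H)) (M : Submodule ℂ (H →L[ℂ] K))
    (hAc : IsClosed (A : Set (H →L[ℂ] H))) (hAm : ∀ x ∈ A, ∀ y ∈ A, x ∘L y ∈ A)
    {ι : Type*} [Preorder ι] [IsDirected ι (· ≤ ·)] [Nonempty ι]
    (e : ι → (H →L[ℂ] H)) (he : ∀ i, e i ∈ A) (hen : ∀ i, ‖e i‖ ≤ 1)
    (heL : ∀ x ∈ A, Tendsto (fun i => e i ∘L x) atTop (𝓝 x))
    (heR : ∀ x ∈ A, Tendsto (fun i => x ∘L e i) atTop (𝓝 x))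
    (hMc : IsClosed (M : Set (H →L[ℂ] K)))
    (hMtro : ∀ x ∈ M, ∀ y ∈ M, ∀ z ∈ M, x ∘L (adjoint y ∘L z) ∈ M)
    (hMMA : ∀ x ∈ M, ∀ y ∈ M, ∀ a ∈ A, adjoint x ∘L (y ∘L a) ∈ A)
    (m : ℕ → (H →L[ℂ] K)) (hm : ∀ i, m i ∈ M)
    (hmn : ∀ n, ‖∑ i ∈ Finset.range n, m i ∘L adjoint (m i)‖ ≤ 1)
    (hms : ∀ x ∈ M, Tendsto (fun n => ∑ i ∈ Finset.range n, (m i ∘L adjoint (m i)) ∘L x)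
      atTop (𝓝 x))
    (Y : Set (H →L[ℂ] K))
    (hY : Y = clspan {x : H →L[ℂ] K | ∃ m' ∈ M, ∃ a ∈ A, x = m' ∘L a}) :
    ∀ y ∈ Y, (∀ i, adjoint (m i) ∘L y ∈ A) ∧
      ∃ S : H →L[ℂ] H,
        Tendsto (fun n => ∑ i ∈ Finset.range n,
          adjoint (adjoint (m i) ∘L y) ∘L (adjoint (m i) ∘L y)) atTop (𝓝 S) ∧
        ‖S‖ = ‖y‖ ^ 2 :=
  stmt_6_general A M hAc hMMA m hm hmn hms Y hY
end

section
/- Let M ⊆ B(H,K) be a σ-TRO with sequence (m_i) satisfying ∑_i m m_i* m_i = m for all m ∈ M and ‖∑_{i≤n} m_i* m_i‖ ≤ 1. Let D₁ = closed span of M M*, D₂ = closed span of M* M. Suppose E is a right D₁-module, F is a right D₂-module, and a : F × M* → E is a bounded bilinear balanced pairing with a(e·m, n*) = e (m n*) realizing E ≅ F ⊗_{D₂} M*. Then for every f ∈ F (of the form f = e ⊗ m) one has ∑_i a(f, m_i*) · m_i = f, with norm convergence. -/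
open Filter Topology ContinuousLinearMap

theorem LinearMap.tendsto_sum_range_map_of_norm_le {𝕜 X Y : Type*} [NontriviallyNormedField 𝕜]
    [SeminormedAddCommGroup X] [NormedSpace 𝕜 X] [SeminormedAddCommGroup Y] [NormedSpace 𝕜 Y]
    (g : X →ₗ[𝕜] Y) {C : ℝ} (hg : ∀ x, ‖g x‖ ≤ C * ‖x‖) {s : ℕ → X} {x : X}
    (hs : Tendsto (fun n => ∑ i ∈ Finset.range n, s i) atTop (𝓝 x)) :
    Tendsto (fun n => ∑ i ∈ Finset.range n, g (s i)) atTop (𝓝 (g x)) := by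
  simp_rw [← map_sum]
  exact ((g.mkContinuous C hg).continuous.tendsto x).comp hs

theorem pairing_comp_adjoint_eq {H K E F : Type*}
    [NormedAddCommGroup H] [InnerProductSpace ℂ H] [CompleteSpace H]
    [NormedAddCommGroup K] [InnerProductSpace ℂ K] [CompleteSpace K]
    [AddCommGroup E] [Module ℂ E] [AddCommGroup F] [Module ℂ F]
    (M : Submodule ℂ (H →L[ℂ] K)) (ρ : E →ₗ[ℂ] (K →L[ℂ] K) →ₗ[ℂ] E)
    (t : E →ₗ[ℂ] (H →L[ℂ] K) →ₗ[ℂ] F) (a : F →ₗ[ℂ] (K →L[ℂ] H) →ₗ[ℂ] E)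
    (htbal : ∀ (e : E), ∀ x ∈ M, ∀ y ∈ M, ∀ z ∈ M,
      t (ρ e (x ∘L adjoint y)) z = t e ((x ∘L adjoint y) ∘L z))
    (hcompat : ∀ (e : E), ∀ x ∈ M, ∀ y ∈ M,
      a (t e x) (adjoint y) = ρ e (x ∘L adjoint y))
    (e : E) {x y z : H →L[ℂ] K} (hx : x ∈ M) (hy : y ∈ M) (hz : z ∈ M) :
    t (a (t e x) (adjoint y)) z = t e (x ∘L (adjoint y ∘L z)) := by
  rw [hcompat e x hx y hy, htbal e x hx y hy z hz, comp_assoc]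

theorem stmt_11_general {H K : Type*} [NormedAddCommGroup H] [InnerProductSpace ℂ H] [CompleteSpace H]
    [NormedAddCommGroup K] [InnerProductSpace ℂ K] [CompleteSpace K]
    (M : Submodule ℂ (H →L[ℂ] K))
    (m : ℕ → (H →L[ℂ] K)) (hm : ∀ i, m i ∈ M)
    (hms : ∀ x ∈ M, Tendsto (fun n => ∑ i ∈ Finset.range n, x ∘L (adjoint (m i) ∘L m i))
      atTop (𝓝 x))
    {E F : Type*} [NormedAddCommGroup E] [NormedSpace ℂ E]
    [NormedAddCommGroup F] [NormedSpace ℂ F]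
    -- the right action of D₁ = [M M*] ⊆ B(K) on E
    (ρ : E →ₗ[ℂ] (K →L[ℂ] K) →ₗ[ℂ] E)
    -- the pairing (e, m) ↦ e ⊗ m ∈ F ≅ E ⊗_{D₁} M
    (t : E →ₗ[ℂ] (H →L[ℂ] K) →ₗ[ℂ] F)
    (ht : ∀ (e : E) (x : H →L[ℂ] K), ‖t e x‖ ≤ ‖e‖ * ‖x‖)
    (htbal : ∀ (e : E), ∀ x ∈ M, ∀ y ∈ M, ∀ z ∈ M,
      t (ρ e (x ∘L adjoint y)) z = t e ((x ∘L adjoint y) ∘L z))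
    -- the pairing (f, n*) ↦ a(f ⊗ n*) ∈ E realizing E ≅ F ⊗_{D₂} M*
    (a : F →ₗ[ℂ] (K →L[ℂ] H) →ₗ[ℂ] E)
    (hcompat : ∀ (e : E), ∀ x ∈ M, ∀ y ∈ M,
      a (t e x) (adjoint y) = ρ e (x ∘L adjoint y)) :
    ∀ (e : E), ∀ x ∈ M,
      Tendsto (fun n => ∑ i ∈ Finset.range n, t (a (t e x) (adjoint (m i))) (m i))
        atTop (𝓝 (t e x)) := by
  intro e x hx
  simp_rw [pairing_comp_adjoint_eq M ρ t a htbal hcompat e hx (hm _) (hm _)]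
  exact (t e).tendsto_sum_range_map_of_norm_le (ht e) (hms x hx)

/-- Let `M ⊆ B(H,K)` be a σ-TRO with sequence `(m i)` satisfying
`∑ᵢ m mᵢ* mᵢ = m` for all `m ∈ M` and `‖∑_{i<n} mᵢ* mᵢ‖ ≤ 1`. Let `E` be a right
`D₁ = [M M*]`-module, `F` a right `D₂ = [M* M]`-module, `t : (e, m) ↦ e ⊗ m ∈ F` the
balanced pairing and `a : (f, n*) ↦ a(f ⊗ n*) ∈ E` the bounded pairing realizing
`E ≅ F ⊗_{D₂} M*`, so that `a((e ⊗ m) ⊗ n*) = e · (m n*)`. Then for every elementary tensor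
`f = e ⊗ m` (`m ∈ M`) one has `∑ᵢ a(f ⊗ mᵢ*) ⊗ mᵢ = f` with norm convergence. -/
theorem stmt_11 {H K : Type*} [NormedAddCommGroup H] [InnerProductSpace ℂ H] [CompleteSpace H]
    [NormedAddCommGroup K] [InnerProductSpace ℂ K] [CompleteSpace K]
    (M : Submodule ℂ (H →L[ℂ] K)) (hMc : IsClosed (M : Set (H →L[ℂ] K)))
    (hMtro : ∀ x ∈ M, ∀ y ∈ M, ∀ z ∈ M, x ∘L (adjoint y ∘L z) ∈ M)
    (m : ℕ → (H →L[ℂ] K)) (hm : ∀ i, m i ∈ M)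
    (hmn : ∀ n, ‖∑ i ∈ Finset.range n, adjoint (m i) ∘L m i‖ ≤ 1)
    (hms : ∀ x ∈ M, Tendsto (fun n => ∑ i ∈ Finset.range n, x ∘L (adjoint (m i) ∘L m i))
      atTop (𝓝 x))
    {E F : Type*} [NormedAddCommGroup E] [NormedSpace ℂ E]
    [NormedAddCommGroup F] [NormedSpace ℂ F]
    -- the right action of D₁ = [M M*] ⊆ B(K) on E
    (ρ : E →ₗ[ℂ] (K →L[ℂ] K) →ₗ[ℂ] E)
    (hρ : ∀ (e : E) (d : K →L[ℂ] K), ‖ρ e d‖ ≤ ‖e‖ * ‖d‖)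
    -- the pairing (e, m) ↦ e ⊗ m ∈ F ≅ E ⊗_{D₁} M
    (t : E →ₗ[ℂ] (H →L[ℂ] K) →ₗ[ℂ] F)
    (ht : ∀ (e : E) (x : H →L[ℂ] K), ‖t e x‖ ≤ ‖e‖ * ‖x‖)
    (htbal : ∀ (e : E), ∀ x ∈ M, ∀ y ∈ M, ∀ z ∈ M,
      t (ρ e (x ∘L adjoint y)) z = t e ((x ∘L adjoint y) ∘L z))
    -- the pairing (f, n*) ↦ a(f ⊗ n*) ∈ E realizing E ≅ F ⊗_{D₂} M*
    (a : F →ₗ[ℂ] (K →L[ℂ] H) →ₗ[ℂ] E)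
    (ha : ∀ (f : F) (x : K →L[ℂ] H), ‖a f x‖ ≤ ‖f‖ * ‖x‖)
    (hcompat : ∀ (e : E), ∀ x ∈ M, ∀ y ∈ M,
      a (t e x) (adjoint y) = ρ e (x ∘L adjoint y)) :
    ∀ (e : E), ∀ x ∈ M,
      Tendsto (fun n => ∑ i ∈ Finset.range n, t (a (t e x) (adjoint (m i))) (m i))
        atTop (𝓝 (t e x)) :=
  stmt_11_general M m hm hms ρ t ht htbal a hcompat
end

section
/- Let A ⊆ B(H) be an operator algebra with contractive approximate identity, M ⊆ B(H,K) a σ-TRO with M* M A ⊆ A, and Y = closed span of M A. For each n ∈ ℕ define Φ_n : Y → C_n(A), Φ_n(y) = (m_1* y, …, m_n* y)^T and Ψ_n : C_n(A) → Y, Ψ_n(a_1,…,a_n) = ∑_{i≤n} m_i a_i, where (m_i) is a σ-TRO sequence with ∑ m_i m_i* m = m and partial sums of norm ≤ 1. Then Ψ_n ∘ Φ_n → Id_Y strongly on Y, and for each fixed r, ‖Φ_r ∘ Ψ_n ∘ Φ_n − Φ_r‖ → 0 as n → ∞. -/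
open Filter Topology ContinuousLinearMap

/-- A column of `r` operators `H → H`, viewed as one operator `H → ℓ²(Fin r; H)`.  This
realizes elements of the column space `C_r(A)` over an operator algebra `A ⊆ B(H)`. -/
noncomputable def colMap {H : Type*} [NormedAddCommGroup H] [InnerProductSpace ℂ H]
    (r : ℕ) (b : Fin r → (H →L[ℂ] H)) : H →L[ℂ] (PiLp 2 (fun _ : Fin r => H)) :=
  ((PiLp.continuousLinearEquiv 2 ℂ (fun _ : Fin r => H)).symm :
      (∀ _ : Fin r, H) →L[ℂ] PiLp 2 (fun _ : Fin r => H)) ∘L ContinuousLinearMap.pi b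

/-! Write `s_n = ∑_{j<n} m_j m_j*`. Since `‖s_n‖ ≤ 1`, the operators `y ↦ s_n y` are
equicontinuous, so the `y` with `s_n y → y` form a closed subspace; it contains every `m a` with
`m ∈ M` because `s_n m → m`, hence all of `Y`. Since `s_n` is self-adjoint, taking adjoints in
`s_n m_i → m_i` gives `m_i* s_n → m_i*` in norm, and the column `(m_i* (s_n y - y))_{i<r}` has norm
at most `(∑_{i<r} ‖m_i* s_n - m_i*‖) ‖y‖`. -/

theorem ContinuousLinearMap.tendsto_of_mem_closure_span_s13 {ι 𝕜 E F : Type*}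
    [NontriviallyNormedField 𝕜] [SeminormedAddCommGroup E] [NormedSpace 𝕜 E]
    [SeminormedAddCommGroup F] [NormedSpace 𝕜 F] {l : Filter ι} {T : ι → E →L[𝕜] F} {C : ℝ}
    (hT : ∀ i, ‖T i‖ ≤ C) (f : E →L[𝕜] F) {S : Set E}
    (hS : ∀ x ∈ S, Tendsto (fun i => T i x) l (𝓝 (f x))) {x : E}
    (hx : x ∈ closure (Submodule.span 𝕜 S : Set E)) :
    Tendsto (fun i => T i x) l (𝓝 (f x)) := by
  have hequi : Equicontinuous ((↑) ∘ T : ι → E → F) := by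
    have hbdd_iff := (NormedSpace.equicontinuous_TFAE T).out 5 1
    exact hbdd_iff.mp ⟨C, hT⟩
  refine closure_minimal (fun z hz => ?_) (hequi.isClosed_setOfPred_tendsto f.continuous) hx
  induction hz using Submodule.span_induction with
  | mem z hz => exact hS z hz
  | zero => simpa using tendsto_const_nhds
  | add y z _ _ hy hz => simpa using hy.add hz
  | smul c z _ hz => simpa using hz.const_smul c

section

variable {H K : Type*} [NormedAddCommGroup H] [InnerProductSpace ℂ H]
  [NormedAddCommGroup K] [InnerProductSpace ℂ K]

theorem norm_colMap_le (r : ℕ) (b : Fin r → H →L[ℂ] H) : ‖colMap r b‖ ≤ ∑ i, ‖b i‖ := by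
  refine opNorm_le_bound _ (Finset.sum_nonneg fun i _ => norm_nonneg _) fun ξ => ?_
  have hnorm : ‖colMap r b ξ‖ = Real.sqrt (∑ i, ‖b i ξ‖ ^ 2) := by
    rw [colMap, comp_apply, PiLp.norm_eq_of_L2]
    rfl
  calc ‖colMap r b ξ‖ ≤ Real.sqrt ((∑ i, ‖b i ξ‖) ^ 2) := by
        rw [hnorm]
        exact Real.sqrt_le_sqrt (Finset.sum_sq_le_sq_sum_of_nonneg fun i _ => norm_nonneg _)
    _ = ∑ i, ‖b i ξ‖ := Real.sqrt_sq (Finset.sum_nonneg fun i _ => norm_nonneg _)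
    _ ≤ (∑ i, ‖b i‖) * ‖ξ‖ := by
        rw [Finset.sum_mul]
        exact Finset.sum_le_sum fun i _ => le_opNorm _ _

theorem norm_colMap_comp_le (r : ℕ) (c : Fin r → K →L[ℂ] H) (y : H →L[ℂ] K) :
    ‖colMap r (fun i => c i ∘L y)‖ ≤ (∑ i, ‖c i‖) * ‖y‖ :=
  (norm_colMap_le r _).trans <| by
    rw [Finset.sum_mul]
    exact Finset.sum_le_sum fun i _ => opNorm_comp_le _ _

theorem tendsto_comp_of_mem_clspan_s13 {α : Type*} {l : Filter α} {s : α → K →L[ℂ] K}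
    (hs : ∀ n, ‖s n‖ ≤ 1) (M : Set (H →L[ℂ] K)) (A : Set (H →L[ℂ] H))
    (hM : ∀ x ∈ M, Tendsto (fun n => s n ∘L x) l (𝓝 x)) {y : H →L[ℂ] K}
    (hy : y ∈ clspan {x | ∃ m ∈ M, ∃ a ∈ A, x = m ∘L a}) :
    Tendsto (fun n => s n ∘L y) l (𝓝 y) := by
  refine tendsto_of_mem_closure_span_s13 (T := fun n => compL ℂ H K K (s n)) (C := 1)
    (fun n => opNorm_le_bound _ zero_le_one fun x => ?_) (ContinuousLinearMap.id ℂ _) ?_ hy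
  · exact (opNorm_comp_le _ _).trans (mul_le_mul_of_nonneg_right (hs n) (norm_nonneg x))
  · rintro _ ⟨m, hm, a, -, rfl⟩
    refine (((continuous_id.clm_comp_const a).tendsto m).comp (hM m hm)).congr fun n => ?_
    exact comp_assoc _ _ _

variable [CompleteSpace H] [CompleteSpace K]

theorem isSelfAdjoint_sum_comp_adjoint {ι : Type*} (s : Finset ι) (m : ι → H →L[ℂ] K) :
    IsSelfAdjoint (∑ i ∈ s, m i ∘L adjoint (m i)) :=
  isSelfAdjoint_sum s fun i _ => by
    rw [isSelfAdjoint_iff', adjoint_comp, adjoint_adjoint]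

theorem tendsto_adjoint_comp_of_tendsto_comp {α : Type*} {l : Filter α} {s : α → K →L[ℂ] K}
    (hs : ∀ n, IsSelfAdjoint (s n)) {x : H →L[ℂ] K}
    (hx : Tendsto (fun n => s n ∘L x) l (𝓝 x)) :
    Tendsto (fun n => adjoint x ∘L s n) l (𝓝 (adjoint x)) := by
  have := ((adjoint : (H →L[ℂ] K) ≃ₗᵢ⋆[ℂ] (K →L[ℂ] H)).continuous.tendsto x).comp hx
  refine this.congr fun n => ?_
  simp only [Function.comp_apply, adjoint_comp, (hs n).adjoint_eq]

end

theorem stmt_13_general {H K : Type*} [NormedAddCommGroup H] [InnerProductSpace ℂ H] [CompleteSpace H]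
    [NormedAddCommGroup K] [InnerProductSpace ℂ K] [CompleteSpace K]
    (A : Submodule ℂ (H →L[ℂ] H)) (M : Submodule ℂ (H →L[ℂ] K))
    (m : ℕ → (H →L[ℂ] K)) (hm : ∀ i, m i ∈ M)
    (hmn : ∀ n, ‖∑ i ∈ Finset.range n, m i ∘L adjoint (m i)‖ ≤ 1)
    (hms : ∀ x ∈ M, Tendsto (fun n => ∑ i ∈ Finset.range n, (m i ∘L adjoint (m i)) ∘L x)
      atTop (𝓝 x))
    (Y : Set (H →L[ℂ] K))
    (hY : Y = clspan {x : H →L[ℂ] K | ∃ m' ∈ M, ∃ a ∈ A, x = m' ∘L a}) :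
    -- (1) Ψ_n ∘ Φ_n → Id_Y strongly on Y
    (∀ y ∈ Y, Tendsto (fun n => ∑ i ∈ Finset.range n, (m i ∘L adjoint (m i)) ∘L y)
      atTop (𝓝 y)) ∧
    -- (2) for each fixed r, ‖Φ_r ∘ Ψ_n ∘ Φ_n − Φ_r‖ → 0 in the operator norm over Y,
    -- where (Φ_r ∘ Ψ_n ∘ Φ_n − Φ_r)(y) is the column (mᵢ* (s_n y − y))_{i < r} and
    -- s_n = ∑_{j<n} m_j m_j*
    (∀ r : ℕ, ∀ ε > (0 : ℝ), ∃ N : ℕ, ∀ n ≥ N, ∀ y ∈ Y,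
      ‖colMap r (fun i : Fin r => adjoint (m i) ∘L
        ((∑ j ∈ Finset.range n, (m j ∘L adjoint (m j)) ∘L y) - y))‖ ≤ ε * ‖y‖) := by
  set s : ℕ → K →L[ℂ] K := fun n => ∑ j ∈ Finset.range n, m j ∘L adjoint (m j)
  have hs_comp (n : ℕ) (y : H →L[ℂ] K) :
      ∑ j ∈ Finset.range n, (m j ∘L adjoint (m j)) ∘L y = s n ∘L y :=
    (finsetSum_comp _ _).symm
  simp only [hs_comp] at hms ⊢
  refine ⟨fun y hy => tendsto_comp_of_mem_clspan_s13 hmn M A hms (hY ▸ hy), fun r ε hε => ?_⟩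
  have hsa (n : ℕ) : IsSelfAdjoint (s n) := isSelfAdjoint_sum_comp_adjoint _ _
  have hdefect : Tendsto (fun n => ∑ i : Fin r, ‖adjoint (m i) ∘L s n - adjoint (m i)‖)
      atTop (𝓝 0) := by
    simpa using tendsto_finsetSum _ fun (i : Fin r) _ => tendsto_iff_norm_sub_tendsto_zero.mp
      (tendsto_adjoint_comp_of_tendsto_comp hsa (hms _ (hm i)))
  obtain ⟨N, hN⟩ := eventually_atTop.mp (hdefect.eventually (eventually_le_nhds hε))
  refine ⟨N, fun n hn y _ => ?_⟩
  have hcol : (fun i : Fin r => adjoint (m i) ∘L (s n ∘L y - y)) =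
      fun i : Fin r => (adjoint (m i) ∘L s n - adjoint (m i)) ∘L y := by
    ext1 i
    rw [comp_sub, sub_comp, comp_assoc]
  rw [hcol]
  exact (norm_colMap_comp_le r _ y).trans (mul_le_mul_of_nonneg_right (hN n hn) (norm_nonneg y))

/-- With `A ⊆ B(H)` an approximately unital operator algebra, `M` a σ-TRO with
`M* M A ⊆ A`, `Y = clspan (M A)`, and `(m i)` a σ-TRO sequence, the maps
`Φ_n(y) = (m₁* y, …, m_n* y)ᵗ` and `Ψ_n(a₁,…,a_n) = ∑ mᵢ aᵢ` satisfy: `Ψ_n ∘ Φ_n → Id_Y`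
strongly on `Y`, and for each fixed `r`, `‖Φ_r ∘ Ψ_n ∘ Φ_n − Φ_r‖ → 0` as `n → ∞`
(the operator norm over `Y`). -/
theorem stmt_13 {H K : Type*} [NormedAddCommGroup H] [InnerProductSpace ℂ H] [CompleteSpace H]
    [NormedAddCommGroup K] [InnerProductSpace ℂ K] [CompleteSpace K]
    (A : Submodule ℂ (H →L[ℂ] H)) (M : Submodule ℂ (H →L[ℂ] K))
    (hAc : IsClosed (A : Set (H →L[ℂ] H))) (hAm : ∀ x ∈ A, ∀ y ∈ A, x ∘L y ∈ A)
    {ι : Type*} [Preorder ι] [IsDirected ι (· ≤ ·)] [Nonempty ι]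
    (e : ι → (H →L[ℂ] H)) (he : ∀ i, e i ∈ A) (hen : ∀ i, ‖e i‖ ≤ 1)
    (heL : ∀ x ∈ A, Tendsto (fun i => e i ∘L x) atTop (𝓝 x))
    (heR : ∀ x ∈ A, Tendsto (fun i => x ∘L e i) atTop (𝓝 x))
    (hMc : IsClosed (M : Set (H →L[ℂ] K)))
    (hMtro : ∀ x ∈ M, ∀ y ∈ M, ∀ z ∈ M, x ∘L (adjoint y ∘L z) ∈ M)
    (hMMA : ∀ x ∈ M, ∀ y ∈ M, ∀ a ∈ A, adjoint x ∘L (y ∘L a) ∈ A)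
    (m : ℕ → (H →L[ℂ] K)) (hm : ∀ i, m i ∈ M)
    (hmn : ∀ n, ‖∑ i ∈ Finset.range n, m i ∘L adjoint (m i)‖ ≤ 1)
    (hms : ∀ x ∈ M, Tendsto (fun n => ∑ i ∈ Finset.range n, (m i ∘L adjoint (m i)) ∘L x)
      atTop (𝓝 x))
    (Y : Set (H →L[ℂ] K))
    (hY : Y = clspan {x : H →L[ℂ] K | ∃ m' ∈ M, ∃ a ∈ A, x = m' ∘L a}) :
    -- (1) Ψ_n ∘ Φ_n → Id_Y strongly on Y
    (∀ y ∈ Y, Tendsto (fun n => ∑ i ∈ Finset.range n, (m i ∘L adjoint (m i)) ∘L y)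
      atTop (𝓝 y)) ∧
    -- (2) for each fixed r, ‖Φ_r ∘ Ψ_n ∘ Φ_n − Φ_r‖ → 0 in the operator norm over Y,
    -- where (Φ_r ∘ Ψ_n ∘ Φ_n − Φ_r)(y) is the column (mᵢ* (s_n y − y))_{i < r} and
    -- s_n = ∑_{j<n} m_j m_j*
    (∀ r : ℕ, ∀ ε > (0 : ℝ), ∃ N : ℕ, ∀ n ≥ N, ∀ y ∈ Y,
      ‖colMap r (fun i : Fin r => adjoint (m i) ∘L
        ((∑ j ∈ Finset.range n, (m j ∘L adjoint (m j)) ∘L y) - y))‖ ≤ ε * ‖y‖) :=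
  stmt_13_general A M m hm hmn hms Y hY
end
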